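/- arXiv:2509.02517 — 17 statements merged into one kernel-verified Lean document; each statement's English description precedes it below -/
import Mathlib

section
/- (e-Closure Principle.) Let f be a loss function and α ∈ (0,1]. A measurable random collection ℛ : Ω → (sets of subsets of [m]) controls ER_f simultaneously at level α if and only if there exists an e-collection E = (e_S)_{S ⊆ [m]} such that ℛ(ω) ⊆ ℛ_α^f(E)(ω) for every ω ∈ Ω. In particular: (sufficiency) for every e-collection E, ℛ_α^f(E) controls ER_f simultaneously at level α; (necessity) if ℛ controls ER_f simultaneously at level α, then setting e_S(ω) = max_{R ∈ ℛ(ω) ∪ {∅}} f_S(R)/α for each S ⊆ [m] defines an e-collection E with ℛ(ω) ⊆ ℛ_α^f(E)(ω) for all ω. -/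
open MeasureTheory

open Classical in
/-- The e-Closure collection `ℛ_α^f(E)(ω)`: all candidate rejection sets `R` with
`f_S(R)/α ≤ e_S(ω)` for every `S ⊆ [m]`. -/
noncomputable def eClosure {m : ℕ} {Ω : Type*}
    (f : Finset (Fin m) → Finset (Fin m) → ℝ) (α : ℝ)
    (E : Finset (Fin m) → Ω → ℝ) (ω : Ω) : Finset (Finset (Fin m)) :=
  Finset.univ.filter (fun R => ∀ S : Finset (Fin m), f S R / α ≤ E S ω)

/-- The e-Closure Principle: a measurable random collection controls ER_f
simultaneously at level α iff it is pointwise contained in `ℛ_α^f(E)` for some e-collection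
`E`; sufficiency and the explicit necessity construction. -/
theorem statement_2 (m : ℕ) (hm : 1 ≤ m) {Ω : Type*} [MeasurableSpace Ω]
    (M : Set (Measure Ω)) (hM : ∀ P ∈ M, IsProbabilityMeasure P)
    (H : Fin m → Set (Measure Ω))
    (N : Measure Ω → Finset (Fin m)) (hN : ∀ P i, i ∈ N P ↔ P ∈ H i)
    (f : Finset (Fin m) → Finset (Fin m) → ℝ)
    (hf0 : ∀ N' R : Finset (Fin m), 0 ≤ f N' R)
    (hfe : ∀ N' : Finset (Fin m), f N' ∅ = 0)
    (α : ℝ) (hα : α ∈ Set.Ioc (0 : ℝ) 1)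
    (ℛ : Ω → Finset (Finset (Fin m)))
    (hmeas : ∀ R₀, MeasurableSet {ω | R₀ ∈ ℛ ω}) :
    -- main iff
    ((∀ P ∈ M,
        ∫⁻ ω, ENNReal.ofReal ((insert ∅ (ℛ ω)).sup' (Finset.insert_nonempty _ _)
          (fun R₀ => f (N P) R₀)) ∂P ≤ ENNReal.ofReal α) ↔
      (∃ E : Finset (Fin m) → Ω → ℝ,
        (∀ S, Measurable (E S)) ∧ (∀ S ω, 0 ≤ E S ω) ∧
        (∀ P ∈ M, ∫⁻ ω, ENNReal.ofReal (E (N P) ω) ∂P ≤ 1) ∧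
        (∀ ω, ℛ ω ⊆ eClosure f α E ω))) ∧
    -- sufficiency: for every e-collection, the e-Closure collection controls ER_f
    (∀ E : Finset (Fin m) → Ω → ℝ,
      (∀ S, Measurable (E S)) → (∀ S ω, 0 ≤ E S ω) →
      (∀ P ∈ M, ∫⁻ ω, ENNReal.ofReal (E (N P) ω) ∂P ≤ 1) →
      ∀ P ∈ M,
        ∫⁻ ω, ENNReal.ofReal ((insert ∅ (eClosure f α E ω)).sup'
          (Finset.insert_nonempty _ _) (fun R₀ => f (N P) R₀)) ∂P ≤ ENNReal.ofReal α) ∧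
    -- necessity: the explicit construction e_S = max_{R ∈ ℛ(ω) ∪ {∅}} f_S(R)/α works
    ((∀ P ∈ M,
        ∫⁻ ω, ENNReal.ofReal ((insert ∅ (ℛ ω)).sup' (Finset.insert_nonempty _ _)
          (fun R₀ => f (N P) R₀)) ∂P ≤ ENNReal.ofReal α) →
      (∀ S : Finset (Fin m), Measurable (fun ω =>
        (insert ∅ (ℛ ω)).sup' (Finset.insert_nonempty _ _) (fun R₀ => f S R₀) / α)) ∧
      (∀ (S : Finset (Fin m)) (ω : Ω),
        0 ≤ (insert ∅ (ℛ ω)).sup' (Finset.insert_nonempty _ _) (fun R₀ => f S R₀) / α) ∧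
      (∀ P ∈ M,
        ∫⁻ ω, ENNReal.ofReal ((insert ∅ (ℛ ω)).sup' (Finset.insert_nonempty _ _)
          (fun R₀ => f (N P) R₀) / α) ∂P ≤ 1) ∧
      (∀ ω, ℛ ω ⊆ eClosure f α
        (fun S ω' =>
          (insert ∅ (ℛ ω')).sup' (Finset.insert_nonempty _ _) (fun R₀ => f S R₀) / α) ω)) := by

  obtain ⟨hα0, hα1⟩ := hα
  -- measurability of ℛ viewed into the discrete (⊤) σ-algebra
  have hRmeas : @Measurable Ω (Finset (Finset (Fin m))) _ ⊤ ℛ := by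
    letI : MeasurableSpace (Finset (Finset (Fin m))) := ⊤
    apply measurable_to_countable'
    intro A
    have hA : ℛ ⁻¹' {A} = ⋂ R : Finset (Fin m), {ω | R ∈ ℛ ω ↔ R ∈ A} := by
      ext ω
      simp [Set.mem_iInter, Finset.ext_iff]
    rw [hA]
    apply MeasurableSet.iInter
    intro R
    by_cases hRA : R ∈ A
    · simpa [hRA] using (hmeas R)
    · convert (hmeas R).compl using 1
      ext ω
      simp [hRA]
  have hcomp : ∀ g : Finset (Finset (Fin m)) → ℝ, Measurable (fun ω => g (ℛ ω)) := by
    intro g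
    exact (@measurable_from_top (Finset (Finset (Fin m))) ℝ _ g).comp hRmeas
  -- nonnegativity of the sup'
  have hsupnn : ∀ (S : Finset (Fin m)) (A : Finset (Finset (Fin m))),
      0 ≤ (insert ∅ A).sup' (Finset.insert_nonempty _ _) (fun R₀ => f S R₀) := by
    intro S A
    have := Finset.le_sup' (f := fun R₀ => f S R₀) (Finset.mem_insert_self ∅ A)
    simpa [hfe S] using this
  -- general sufficiency lemma
  have suff : ∀ E : Finset (Fin m) → Ω → ℝ, (∀ S ω, 0 ≤ E S ω) →
      (∀ P ∈ M, ∫⁻ ω, ENNReal.ofReal (E (N P) ω) ∂P ≤ 1) →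
      ∀ ℛ' : Ω → Finset (Finset (Fin m)), (∀ ω, ℛ' ω ⊆ eClosure f α E ω) →
      ∀ P ∈ M,
        ∫⁻ ω, ENNReal.ofReal ((insert ∅ (ℛ' ω)).sup' (Finset.insert_nonempty _ _)
          (fun R₀ => f (N P) R₀)) ∂P ≤ ENNReal.ofReal α := by
    intro E hnn hint ℛ' hsub P hP
    have hbound : ∀ ω, (insert ∅ (ℛ' ω)).sup' (Finset.insert_nonempty _ _)
        (fun R₀ => f (N P) R₀) ≤ E (N P) ω * α := by
      intro ω
      apply Finset.sup'_le
      intro R hR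
      rcases Finset.mem_insert.1 hR with h | h
      · subst h
        rw [hfe]
        exact mul_nonneg (hnn _ _) hα0.le
      · have hmem := hsub ω h
        rw [eClosure, Finset.mem_filter] at hmem
        have := hmem.2 (N P)
        rwa [div_le_iff₀ hα0] at this
    calc ∫⁻ ω, ENNReal.ofReal ((insert ∅ (ℛ' ω)).sup' (Finset.insert_nonempty _ _)
          (fun R₀ => f (N P) R₀)) ∂P
        ≤ ∫⁻ ω, ENNReal.ofReal (E (N P) ω * α) ∂P :=
          lintegral_mono fun ω => ENNReal.ofReal_le_ofReal (hbound ω)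
      _ = ∫⁻ ω, ENNReal.ofReal (E (N P) ω) * ENNReal.ofReal α ∂P := by
          simp_rw [ENNReal.ofReal_mul (hnn _ _)]
      _ = (∫⁻ ω, ENNReal.ofReal (E (N P) ω) ∂P) * ENNReal.ofReal α :=
          lintegral_mul_const' _ _ ENNReal.ofReal_ne_top
      _ ≤ 1 * ENNReal.ofReal α := mul_le_mul_left (hint P hP) _
      _ = ENNReal.ofReal α := one_mul _
  -- necessity construction
  have nec : (∀ P ∈ M,
        ∫⁻ ω, ENNReal.ofReal ((insert ∅ (ℛ ω)).sup' (Finset.insert_nonempty _ _)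
          (fun R₀ => f (N P) R₀)) ∂P ≤ ENNReal.ofReal α) →
      (∀ S : Finset (Fin m), Measurable (fun ω =>
        (insert ∅ (ℛ ω)).sup' (Finset.insert_nonempty _ _) (fun R₀ => f S R₀) / α)) ∧
      (∀ (S : Finset (Fin m)) (ω : Ω),
        0 ≤ (insert ∅ (ℛ ω)).sup' (Finset.insert_nonempty _ _) (fun R₀ => f S R₀) / α) ∧
      (∀ P ∈ M,
        ∫⁻ ω, ENNReal.ofReal ((insert ∅ (ℛ ω)).sup' (Finset.insert_nonempty _ _)
          (fun R₀ => f (N P) R₀) / α) ∂P ≤ 1) ∧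
      (∀ ω, ℛ ω ⊆ eClosure f α
        (fun S ω' =>
          (insert ∅ (ℛ ω')).sup' (Finset.insert_nonempty _ _) (fun R₀ => f S R₀) / α) ω) := by
    intro hctrl
    refine ⟨?_, ?_, ?_, ?_⟩
    · intro S
      exact hcomp (fun A => (insert ∅ A).sup' (Finset.insert_nonempty _ _)
        (fun R₀ => f S R₀) / α)
    · intro S ω
      exact div_nonneg (hsupnn S (ℛ ω)) hα0.le
    · intro P hP
      have hkey : ∀ ω, ENNReal.ofReal ((insert ∅ (ℛ ω)).sup' (Finset.insert_nonempty _ _)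
          (fun R₀ => f (N P) R₀) / α)
          = ENNReal.ofReal ((insert ∅ (ℛ ω)).sup' (Finset.insert_nonempty _ _)
          (fun R₀ => f (N P) R₀)) * (ENNReal.ofReal α)⁻¹ := by
        intro ω
        rw [div_eq_mul_inv, ENNReal.ofReal_mul (hsupnn _ _),
          ENNReal.ofReal_inv_of_pos hα0]
      simp_rw [hkey]
      rw [lintegral_mul_const' _ _ (ENNReal.inv_ne_top.2 (ENNReal.ofReal_pos.2 hα0).ne')]
      calc (∫⁻ ω, ENNReal.ofReal ((insert ∅ (ℛ ω)).sup' (Finset.insert_nonempty _ _)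
            (fun R₀ => f (N P) R₀)) ∂P) * (ENNReal.ofReal α)⁻¹
          ≤ ENNReal.ofReal α * (ENNReal.ofReal α)⁻¹ := mul_le_mul_left (hctrl P hP) _
        _ = 1 := ENNReal.mul_inv_cancel (ENNReal.ofReal_pos.2 hα0).ne' ENNReal.ofReal_ne_top
    · intro ω R hR
      rw [eClosure, Finset.mem_filter]
      refine ⟨Finset.mem_univ _, fun S => ?_⟩
      exact div_le_div_of_nonneg_right
        (Finset.le_sup' (f := fun R₀ => f S R₀) (Finset.mem_insert_of_mem hR)) hα0.le
  refine ⟨⟨fun hctrl => ?_, fun ⟨E, hEmeas, hEnn, hEint, hEsub⟩ => ?_⟩, ?_, nec⟩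
  · obtain ⟨h1, h2, h3, h4⟩ := nec hctrl
    exact ⟨_, h1, h2, h3, h4⟩
  · exact suff E hEnn hEint ℛ hEsub
  · intro E hEmeas hEnn hEint P hP
    exact suff E hEnn hEint (fun ω => eClosure f α E ω) (fun ω => Finset.Subset.refl _) P hP
end

section
/- Let f be a loss function and α ∈ (0,1]. A measurable map 𝐑 : Ω → 2^[m] satisfies ∫ f_{N_P}(𝐑(ω)) dP(ω) ≤ α for every P ∈ M if and only if there exists an e-collection E = (e_S)_{S ⊆ [m]} such that 𝐑(ω) ∈ ℛ_α^f(E)(ω) for every ω ∈ Ω, i.e., e_S(ω) ≥ f_S(𝐑(ω))/α for all S ⊆ [m] and ω ∈ Ω. -/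
open MeasureTheory

lemma meas_comp_aux {m : ℕ} {Ω : Type*} [MeasurableSpace Ω]
    (R : Ω → Finset (Fin m)) (hRmeas : ∀ R₀, MeasurableSet {ω | R ω = R₀})
    (g : Finset (Fin m) → ℝ) : Measurable (fun ω => g (R ω)) := by
  intro s _
  have : (fun ω => g (R ω)) ⁻¹' s =
      ⋃ (R₀ : Finset (Fin m)) (_ : g R₀ ∈ s), {ω | R ω = R₀} := by
    ext ω
    simp only [Set.mem_preimage, Set.mem_iUnion, Set.mem_setOf_eq]
    constructor
    · intro h; exact ⟨R ω, h, rfl⟩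
    · rintro ⟨R₀, h, rfl⟩; exact h
  rw [this]
  exact MeasurableSet.iUnion fun R₀ => MeasurableSet.iUnion fun _ => hRmeas R₀

/-- A single measurable rejection set controls ER_f at level α iff there is an
e-collection E with `f_S(𝐑(ω))/α ≤ e_S(ω)` for all S and ω (i.e. 𝐑(ω) ∈ ℛ_α^f(E)(ω)). -/
theorem statement_3 (m : ℕ) (hm : 1 ≤ m) {Ω : Type*} [MeasurableSpace Ω]
    (M : Set (Measure Ω)) (hM : ∀ P ∈ M, IsProbabilityMeasure P)
    (H : Fin m → Set (Measure Ω))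
    (N : Measure Ω → Finset (Fin m)) (hN : ∀ P i, i ∈ N P ↔ P ∈ H i)
    (f : Finset (Fin m) → Finset (Fin m) → ℝ)
    (hf0 : ∀ N' R : Finset (Fin m), 0 ≤ f N' R)
    (hfe : ∀ N' : Finset (Fin m), f N' ∅ = 0)
    (α : ℝ) (hα : α ∈ Set.Ioc (0 : ℝ) 1)
    (R : Ω → Finset (Fin m))
    (hRmeas : ∀ R₀, MeasurableSet {ω | R ω = R₀}) :
    (∀ P ∈ M, ∫⁻ ω, ENNReal.ofReal (f (N P) (R ω)) ∂P ≤ ENNReal.ofReal α) ↔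
    (∃ E : Finset (Fin m) → Ω → ℝ,
      (∀ S, Measurable (E S)) ∧ (∀ S ω, 0 ≤ E S ω) ∧
      (∀ P ∈ M, ∫⁻ ω, ENNReal.ofReal (E (N P) ω) ∂P ≤ 1) ∧
      (∀ (ω : Ω) (S : Finset (Fin m)), f S (R ω) / α ≤ E S ω)) := by
  obtain ⟨hα0, hα1⟩ := hα
  constructor
  · intro h
    refine ⟨fun S ω => f S (R ω) / α, ?_, ?_, ?_, ?_⟩
    · intro S
      exact (meas_comp_aux R hRmeas (fun R₀ => f S R₀)).div_const α
    · intro S ω; exact div_nonneg (hf0 _ _) hα0.le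
    · intro P hP
      have key : ∀ ω, ENNReal.ofReal (f (N P) (R ω) / α)
          = ENNReal.ofReal (1 / α) * ENNReal.ofReal (f (N P) (R ω)) := by
        intro ω
        rw [← ENNReal.ofReal_mul (by positivity)]
        ring_nf
      calc ∫⁻ ω, ENNReal.ofReal (f (N P) (R ω) / α) ∂P
          = ∫⁻ ω, ENNReal.ofReal (1 / α) * ENNReal.ofReal (f (N P) (R ω)) ∂P := by
            simp_rw [key]
        _ = ENNReal.ofReal (1 / α) * ∫⁻ ω, ENNReal.ofReal (f (N P) (R ω)) ∂P :=
            lintegral_const_mul' _ _ ENNReal.ofReal_ne_top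
        _ ≤ ENNReal.ofReal (1 / α) * ENNReal.ofReal α :=
            mul_le_mul_right (h P hP) _
        _ = ENNReal.ofReal ((1 / α) * α) := (ENNReal.ofReal_mul (by positivity)).symm
        _ = 1 := by rw [one_div_mul_cancel hα0.ne']; simp
    · intro ω S; exact le_refl _
  · rintro ⟨E, hEmeas, hEnn, hEint, hEge⟩ P hP
    have key : ∀ ω, ENNReal.ofReal (f (N P) (R ω))
        ≤ ENNReal.ofReal α * ENNReal.ofReal (E (N P) ω) := by
      intro ω
      rw [← ENNReal.ofReal_mul hα0.le]
      apply ENNReal.ofReal_le_ofReal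
      have := hEge ω (N P)
      calc f (N P) (R ω) = α * (f (N P) (R ω) / α) := by
            field_simp
        _ ≤ α * E (N P) ω := by
            exact mul_le_mul_of_nonneg_left this hα0.le
    calc ∫⁻ ω, ENNReal.ofReal (f (N P) (R ω)) ∂P
        ≤ ∫⁻ ω, ENNReal.ofReal α * ENNReal.ofReal (E (N P) ω) ∂P :=
          lintegral_mono key
      _ = ENNReal.ofReal α * ∫⁻ ω, ENNReal.ofReal (E (N P) ω) ∂P :=
          lintegral_const_mul' _ _ ENNReal.ofReal_ne_top
      _ ≤ ENNReal.ofReal α * 1 := mul_le_mul_right (hEint P hP) _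
      _ = ENNReal.ofReal α := mul_one _
end

section
/- (Idempotence of the e-Closure construction.) Let f be a loss function, α ∈ (0,1], and let ℛ be a measurable random collection that controls ER_f simultaneously at level α. Define the e-collection E = (e_S) by e_S(ω) = max_{R ∈ ℛ(ω) ∪ {∅}} f_S(R)/α, and then define e'_S(ω) = max_{R ∈ ℛ_α^f(E)(ω)} f_S(R)/α. Then e'_S(ω) = e_S(ω) for every S ⊆ [m] and every ω ∈ Ω. -/
open MeasureTheory

/-- Idempotence of the e-Closure construction: starting from a simultaneously
ER_f-controlling collection ℛ, define e_S(ω) = max_{R ∈ ℛ(ω) ∪ {∅}} f_S(R)/α and then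
e'_S(ω) = max_{R ∈ ℛ_α^f(E)(ω)} f_S(R)/α; these two e-collections coincide. -/
theorem statement_4 (m : ℕ) (hm : 1 ≤ m) {Ω : Type*} [MeasurableSpace Ω]
    (M : Set (Measure Ω)) (hM : ∀ P ∈ M, IsProbabilityMeasure P)
    (H : Fin m → Set (Measure Ω))
    (N : Measure Ω → Finset (Fin m)) (hN : ∀ P i, i ∈ N P ↔ P ∈ H i)
    (f : Finset (Fin m) → Finset (Fin m) → ℝ)
    (hf0 : ∀ N' R : Finset (Fin m), 0 ≤ f N' R)
    (hfe : ∀ N' : Finset (Fin m), f N' ∅ = 0)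
    (α : ℝ) (hα : α ∈ Set.Ioc (0 : ℝ) 1)
    (ℛ : Ω → Finset (Finset (Fin m)))
    (hmeas : ∀ R₀, MeasurableSet {ω | R₀ ∈ ℛ ω})
    (hctrl : ∀ P ∈ M,
      ∫⁻ ω, ENNReal.ofReal ((insert ∅ (ℛ ω)).sup' (Finset.insert_nonempty _ _)
        (fun R₀ => f (N P) R₀)) ∂P ≤ ENNReal.ofReal α)
    (E : Finset (Fin m) → Ω → ℝ)
    (hE : ∀ S ω, E S ω =
      (insert ∅ (ℛ ω)).sup' (Finset.insert_nonempty _ _) (fun R₀ => f S R₀) / α) :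
    ∀ (S : Finset (Fin m)) (ω : Ω),
      (insert ∅ (eClosure f α E ω)).sup' (Finset.insert_nonempty _ _)
          (fun R₀ => f S R₀) / α
        = E S ω := by
  intro S ω
  have hα0 : (0:ℝ) < α := hα.1
  have hEnn : ∀ S', 0 ≤ E S' ω := by
    intro S'
    rw [hE]
    apply div_nonneg _ hα0.le
    refine le_trans ?_ (Finset.le_sup' _ (Finset.mem_insert_self ∅ _))
    simp [hfe]
  apply le_antisymm
  · rw [div_le_iff₀ hα0]
    apply Finset.sup'_le
    intro R hR
    rcases Finset.mem_insert.mp hR with h | h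
    · subst h; simpa [hfe] using mul_nonneg (hEnn S) hα0.le
    · have := (Finset.mem_filter.mp h).2 S
      rw [div_le_iff₀ hα0] at this
      exact this
  · rw [hE]
    apply div_le_div_of_nonneg_right _ hα0.le
    apply Finset.sup'_le
    intro R hR
    apply Finset.le_sup'
    rcases Finset.mem_insert.mp hR with h | h
    · exact h ▸ Finset.mem_insert_self _ _
    · refine Finset.mem_insert_of_mem (Finset.mem_filter.mpr ⟨Finset.mem_univ _, fun S' => ?_⟩)
      rw [hE, div_le_div_iff_of_pos_right hα0]
      exact Finset.le_sup' _ (Finset.mem_insert_of_mem h)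
end

section
/- (e-Closure Principle for FWER control.) Let f be the FWER loss f_N(R) = 1 if N ∩ R ≠ ∅ and 0 otherwise, and let α ∈ (0,1]. A measurable map 𝐑 : Ω → 2^[m] controls FWER at level α, i.e., P({ω : 𝐑(ω) ∩ N_P ≠ ∅}) ≤ α for every P ∈ M, if and only if there exists an e-collection E = (e_S), with each e_S taking values only in {0, 1/α}, such that 𝐑(ω) ∈ ℛ_α^f(E)(ω) for every ω. Moreover, ℛ_α^f(E)(ω) is closed under finite unions, so it has a unique largest element R^FWER_α(E)(ω) = ⋃ ℛ_α^f(E)(ω), and the condition 𝐑(ω) ∈ ℛ_α^f(E)(ω) is equivalent to 𝐑(ω) ⊆ R^FWER_α(E)(ω). -/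
/-!
A rejection set `R` controls FWER at level `α` exactly when the e-collection
`e_S = α⁻¹ · 1{S ∩ R ≠ ∅}` is valid: its expectation under `P` is `α⁻¹ · P(R ∩ N_P ≠ ∅)`.
Conversely, if `R(ω)` lies in the e-Closure of a valid `E`, then `e_{N_P} ≥ α⁻¹` on the event
`R ∩ N_P ≠ ∅`, and Markov's inequality bounds its probability by `α`.
For the FWER loss and nonnegative `E`, membership of `R` in the e-Closure is a condition on each
`i ∈ R` separately, which gives closure under unions and a largest element.
-/

open MeasureTheory

open Classical in
/-- The e-Closure collection for the FWER loss `f_S(R) = 1{S ∩ R ≠ ∅}`. -/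
noncomputable def eClosureFWER (m : ℕ) {Ω : Type*} (α : ℝ)
    (E : Finset (Fin m) → Ω → ℝ) (ω : Ω) : Finset (Finset (Fin m)) :=
  Finset.univ.filter (fun R => ∀ S : Finset (Fin m),
    (if (S ∩ R).Nonempty then (1 : ℝ) else 0) / α ≤ E S ω)

namespace Finset

variable {ι : Type*} [DecidableEq ι] {C : Finset (Finset ι)} {p : ι → Prop}

theorem union_mem_of_mem_iff_forall (hC : ∀ R, R ∈ C ↔ ∀ i ∈ R, p i) {A B : Finset ι}
    (hA : A ∈ C) (hB : B ∈ C) : A ∪ B ∈ C := by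
  rw [hC] at hA hB ⊢
  intro i hi
  rcases mem_union.mp hi with hiA | hiB
  exacts [hA i hiA, hB i hiB]

theorem mem_iff_subset_sup_id_of_mem_iff_forall (hC : ∀ R, R ∈ C ↔ ∀ i ∈ R, p i)
    (R : Finset ι) : R ∈ C ↔ R ⊆ C.sup id := by
  refine ⟨fun hR => le_sup (f := id) hR, fun hR => (hC R).mpr fun i hi => ?_⟩
  obtain ⟨A, hA, hiA⟩ := mem_sup.mp (hR hi)
  exact (hC A).mp hA i hiA

end Finset

section eClosure

variable {m : ℕ} {Ω : Type*} {α : ℝ} {E : Finset (Fin m) → Ω → ℝ} {ω : Ω}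

open Classical in
theorem mem_eClosureFWER {R : Finset (Fin m)} :
    R ∈ eClosureFWER m α E ω ↔
      ∀ S, (if (S ∩ R).Nonempty then (1 : ℝ) else 0) / α ≤ E S ω := by
  simp [eClosureFWER]

theorem one_div_le_of_mem_eClosureFWER {R S : Finset (Fin m)} (hR : R ∈ eClosureFWER m α E ω)
    (hSR : (S ∩ R).Nonempty) : 1 / α ≤ E S ω := by
  simpa [hSR] using mem_eClosureFWER.mp hR S

theorem mem_eClosureFWER_iff_forall_mem (hE : ∀ S, 0 ≤ E S ω) (R : Finset (Fin m)) :
    R ∈ eClosureFWER m α E ω ↔ ∀ i ∈ R, ∀ S, i ∈ S → 1 / α ≤ E S ω := by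
  refine ⟨fun hR i hi S hiS =>
    one_div_le_of_mem_eClosureFWER hR ⟨i, Finset.mem_inter.mpr ⟨hiS, hi⟩⟩, fun h => ?_⟩
  refine mem_eClosureFWER.mpr fun S => ?_
  split_ifs with hSR
  · obtain ⟨i, hi⟩ := hSR
    exact h i (Finset.mem_inter.mp hi).2 S (Finset.mem_inter.mp hi).1
  · simpa using hE S

end eClosure

theorem measurableSet_setOf_mem_of_measurableSet_fiber {Ω β : Type*} [MeasurableSpace Ω]
    [Countable β] {R : Ω → β} (hR : ∀ b, MeasurableSet {ω | R ω = b}) (s : Set β) :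
    MeasurableSet {ω | R ω ∈ s} := by
  have hs : {ω | R ω ∈ s} = ⋃ b ∈ s, {ω | R ω = b} := by ext; simp
  rw [hs]
  exact .biUnion s.to_countable fun b _ => hR b

theorem ENNReal.ofReal_one_div_mul_le_one_iff {α : ℝ} (hα : 0 < α) {x : ENNReal} :
    ENNReal.ofReal (1 / α) * x ≤ 1 ↔ x ≤ ENNReal.ofReal α := by
  have hα' : ENNReal.ofReal α ≠ 0 := by simpa using hα
  rw [one_div, ENNReal.ofReal_inv_of_pos hα, ENNReal.inv_mul_le_iff hα' ENNReal.ofReal_ne_top,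
    mul_one]

section FWER

noncomputable def fwerECollection {m : ℕ} {Ω : Type*} (α : ℝ) (R : Ω → Finset (Fin m))
    (S : Finset (Fin m)) : Ω → ℝ :=
  {ω | (R ω ∩ S).Nonempty}.indicator fun _ => 1 / α

variable {m : ℕ} {Ω : Type*} {α : ℝ} {R : Ω → Finset (Fin m)}

theorem fwerECollection_eq_zero_or_eq (S : Finset (Fin m)) (ω : Ω) :
    fwerECollection α R S ω = 0 ∨ fwerECollection α R S ω = 1 / α := by
  unfold fwerECollection
  by_cases h : (R ω ∩ S).Nonempty <;> simp [h]

theorem mem_eClosureFWER_fwerECollection (ω : Ω) :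
    R ω ∈ eClosureFWER m α (fwerECollection α R) ω := by
  refine mem_eClosureFWER.mpr fun S => ?_
  unfold fwerECollection
  by_cases h : (S ∩ R ω).Nonempty <;> simp [h, Finset.inter_comm (R ω)]

variable [MeasurableSpace Ω] {μ : Measure Ω} (hR : ∀ R₀, MeasurableSet {ω | R ω = R₀})
include hR

theorem measurableSet_inter_nonempty (S : Finset (Fin m)) :
    MeasurableSet {ω | (R ω ∩ S).Nonempty} :=
  measurableSet_setOf_mem_of_measurableSet_fiber hR {R₀ | (R₀ ∩ S).Nonempty}

theorem measurable_fwerECollection (S : Finset (Fin m)) :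
    Measurable (fwerECollection α R S) :=
  measurable_const.indicator (measurableSet_inter_nonempty hR S)

theorem lintegral_fwerECollection (S : Finset (Fin m)) :
    ∫⁻ ω, ENNReal.ofReal (fwerECollection α R S ω) ∂μ =
      ENNReal.ofReal (1 / α) * μ {ω | (R ω ∩ S).Nonempty} := by
  have hofReal : (fun ω => ENNReal.ofReal (fwerECollection α R S ω)) =
      {ω | (R ω ∩ S).Nonempty}.indicator fun _ => ENNReal.ofReal (1 / α) := by
    funext ω
    unfold fwerECollection
    by_cases h : (R ω ∩ S).Nonempty <;> simp [h]
  rw [hofReal, lintegral_indicator_const (measurableSet_inter_nonempty hR S)]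

end FWER

theorem measure_inter_nonempty_le_of_mem_eClosureFWER {m : ℕ} {Ω : Type*} [MeasurableSpace Ω]
    {μ : Measure Ω} {α : ℝ} (hα : 0 < α) {E : Finset (Fin m) → Ω → ℝ} {S : Finset (Fin m)}
    (hE : Measurable (E S)) (hES : ∫⁻ ω, ENNReal.ofReal (E S ω) ∂μ ≤ 1)
    {R : Ω → Finset (Fin m)} (hR : ∀ ω, R ω ∈ eClosureFWER m α E ω) :
    μ {ω | (R ω ∩ S).Nonempty} ≤ ENNReal.ofReal α := by
  have hsub : {ω | (R ω ∩ S).Nonempty} ⊆ {ω | ENNReal.ofReal (1 / α) ≤ ENNReal.ofReal (E S ω)} :=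
    fun ω h => ENNReal.ofReal_le_ofReal
      (one_div_le_of_mem_eClosureFWER (hR ω) (Finset.inter_comm (R ω) S ▸ h))
  rw [← ENNReal.ofReal_one_div_mul_le_one_iff hα]
  calc ENNReal.ofReal (1 / α) * μ {ω | (R ω ∩ S).Nonempty}
      ≤ ENNReal.ofReal (1 / α) * μ {ω | ENNReal.ofReal (1 / α) ≤ ENNReal.ofReal (E S ω)} := by
        gcongr
    _ ≤ ∫⁻ ω, ENNReal.ofReal (E S ω) ∂μ :=
        mul_meas_ge_le_lintegral₀ hE.ennreal_ofReal.aemeasurable _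
    _ ≤ 1 := hES

theorem statement_5_general (m : ℕ) {Ω : Type*} [MeasurableSpace Ω]
    (M : Set (Measure Ω))
    (N : Measure Ω → Finset (Fin m))
    (α : ℝ) (hα : α ∈ Set.Ioc (0 : ℝ) 1) :
    (∀ R : Ω → Finset (Fin m), (∀ R₀, MeasurableSet {ω | R ω = R₀}) →
      ((∀ P ∈ M, P {ω | ((R ω) ∩ N P).Nonempty} ≤ ENNReal.ofReal α) ↔
        ∃ E : Finset (Fin m) → Ω → ℝ,
          (∀ S, Measurable (E S)) ∧
          (∀ S ω, E S ω = 0 ∨ E S ω = 1 / α) ∧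
          (∀ P ∈ M, ∫⁻ ω, ENNReal.ofReal (E (N P) ω) ∂P ≤ 1) ∧
          (∀ ω, R ω ∈ eClosureFWER m α E ω))) ∧
    (∀ E : Finset (Fin m) → Ω → ℝ, (∀ S ω, 0 ≤ E S ω) → ∀ ω : Ω,
      (∀ A ∈ eClosureFWER m α E ω, ∀ B ∈ eClosureFWER m α E ω,
        A ∪ B ∈ eClosureFWER m α E ω) ∧
      (∀ R₀ : Finset (Fin m),
        R₀ ∈ eClosureFWER m α E ω ↔ R₀ ⊆ (eClosureFWER m α E ω).sup id)) := by
  refine ⟨fun R hR => ⟨fun hFWER => ?_, ?_⟩, fun E hE ω => ?_⟩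
  · refine ⟨fwerECollection α R, measurable_fwerECollection hR,
      fwerECollection_eq_zero_or_eq, fun P hP => ?_, mem_eClosureFWER_fwerECollection⟩
    rw [lintegral_fwerECollection hR, ENNReal.ofReal_one_div_mul_le_one_iff hα.1]
    exact hFWER P hP
  · rintro ⟨E, hEmeas, -, hEint, hRE⟩ P hP
    exact measure_inter_nonempty_le_of_mem_eClosureFWER hα.1 (hEmeas _) (hEint P hP) hRE
  · have hC := mem_eClosureFWER_iff_forall_mem (α := α) (hE · ω)
    exact ⟨fun A hA B hB => Finset.union_mem_of_mem_iff_forall hC hA hB,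
      Finset.mem_iff_subset_sup_id_of_mem_iff_forall hC⟩

/-- e-Closure Principle for FWER control: a measurable rejection set controls
FWER at level α iff it lies in the e-Closure of some e-collection taking values in {0, 1/α};
moreover the FWER e-Closure collection is closed under finite unions so membership in it is
equivalent to inclusion in its union (its unique largest element). -/
theorem statement_5 (m : ℕ) (hm : 1 ≤ m) {Ω : Type*} [MeasurableSpace Ω]
    (M : Set (Measure Ω)) (hM : ∀ P ∈ M, IsProbabilityMeasure P)
    (H : Fin m → Set (Measure Ω))
    (N : Measure Ω → Finset (Fin m)) (hN : ∀ P i, i ∈ N P ↔ P ∈ H i)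
    (α : ℝ) (hα : α ∈ Set.Ioc (0 : ℝ) 1) :
    (∀ R : Ω → Finset (Fin m), (∀ R₀, MeasurableSet {ω | R ω = R₀}) →
      ((∀ P ∈ M, P {ω | ((R ω) ∩ N P).Nonempty} ≤ ENNReal.ofReal α) ↔
        ∃ E : Finset (Fin m) → Ω → ℝ,
          (∀ S, Measurable (E S)) ∧
          (∀ S ω, E S ω = 0 ∨ E S ω = 1 / α) ∧
          (∀ P ∈ M, ∫⁻ ω, ENNReal.ofReal (E (N P) ω) ∂P ≤ 1) ∧
          (∀ ω, R ω ∈ eClosureFWER m α E ω))) ∧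
    (∀ E : Finset (Fin m) → Ω → ℝ, (∀ S ω, 0 ≤ E S ω) → ∀ ω : Ω,
      (∀ A ∈ eClosureFWER m α E ω, ∀ B ∈ eClosureFWER m α E ω,
        A ∪ B ∈ eClosureFWER m α E ω) ∧
      (∀ R₀ : Finset (Fin m),
        R₀ ∈ eClosureFWER m α E ω ↔ R₀ ⊆ (eClosureFWER m α E ω).sup id)) :=
  statement_5_general m M N α hα
end

section
/- (e-Closure Principle for FDR control.) Let α ∈ (0,1]. A measurable random collection ℛ : Ω → (sets of subsets of [m]) controls FDR simultaneously at level α, i.e., ∫ max_{R ∈ ℛ(ω) ∪ {∅}} FDP_{N_P}(R) dP(ω) ≤ α for every P ∈ M, if and only if there exists an e-collection E = (e_S)_{S ⊆ [m]} such that for every ω, ℛ(ω) ⊆ {R ⊆ [m] : e_S(ω) ≥ FDP_S(R)/α for all S ⊆ [m]}. -/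
open MeasureTheory

/-- e-Closure Principle for FDR control: a measurable random collection ℛ
controls FDR simultaneously at level α iff there is an e-collection E with
`FDP_S(R)/α ≤ e_S(ω)` for all ω, R ∈ ℛ(ω) and S. -/
theorem statement_6 (m : ℕ) (hm : 1 ≤ m) {Ω : Type*} [MeasurableSpace Ω]
    (M : Set (Measure Ω)) (hM : ∀ P ∈ M, IsProbabilityMeasure P)
    (H : Fin m → Set (Measure Ω))
    (N : Measure Ω → Finset (Fin m)) (hN : ∀ P i, i ∈ N P ↔ P ∈ H i)
    (α : ℝ) (hα : α ∈ Set.Ioc (0 : ℝ) 1)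
    (ℛ : Ω → Finset (Finset (Fin m)))
    (hmeas : ∀ R₀, MeasurableSet {ω | R₀ ∈ ℛ ω}) :
    (∀ P ∈ M,
      ∫⁻ ω, ENNReal.ofReal ((insert ∅ (ℛ ω)).sup' (Finset.insert_nonempty _ _)
        (fun R => ((R ∩ N P).card : ℝ) / ((max R.card 1 : ℕ) : ℝ))) ∂P
        ≤ ENNReal.ofReal α) ↔
    (∃ E : Finset (Fin m) → Ω → ℝ,
      (∀ S, Measurable (E S)) ∧ (∀ S ω, 0 ≤ E S ω) ∧
      (∀ P ∈ M, ∫⁻ ω, ENNReal.ofReal (E (N P) ω) ∂P ≤ 1) ∧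
      (∀ ω, ∀ R ∈ ℛ ω, ∀ S : Finset (Fin m),
        ((R ∩ S).card : ℝ) / ((max R.card 1 : ℕ) : ℝ) / α ≤ E S ω)) := by
  have hα0 : (0 : ℝ) < α := hα.1
  constructor
  · intro h
    refine ⟨fun S ω => ((insert ∅ (ℛ ω)).sup' (Finset.insert_nonempty _ _)
      (fun R => ((R ∩ S).card : ℝ) / ((max R.card 1 : ℕ) : ℝ))) / α, ?_, ?_, ?_, ?_⟩
    · -- measurability
      intro S
      letI : MeasurableSpace (Finset (Finset (Fin m))) := ⊤
      have hRmeas : Measurable ℛ := by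
        intro s _
        have hs : ℛ ⁻¹' s = ⋃ C ∈ s, {ω | ℛ ω = C} := by
          ext ω; simp [Set.mem_preimage]
        rw [hs]
        refine MeasurableSet.biUnion s.to_countable (fun C _ => ?_)
        have hc : {ω | ℛ ω = C} = ⋂ R : Finset (Fin m), {ω | R ∈ ℛ ω ↔ R ∈ C} := by
          ext ω
          simp only [Set.mem_setOf_eq, Set.mem_iInter, Finset.ext_iff]
        rw [hc]
        refine MeasurableSet.iInter (fun R => ?_)
        by_cases hR : R ∈ C
        · have : {ω | R ∈ ℛ ω ↔ R ∈ C} = {ω | R ∈ ℛ ω} := by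
            ext ω; simp [hR]
          rw [this]; exact hmeas R
        · have : {ω | R ∈ ℛ ω ↔ R ∈ C} = {ω | R ∈ ℛ ω}ᶜ := by
            ext ω; simp [hR]
          rw [this]; exact (hmeas R).compl
      exact (measurable_from_top (f := fun C : Finset (Finset (Fin m)) =>
        ((insert ∅ C).sup' (Finset.insert_nonempty _ _)
          (fun R => ((R ∩ S).card : ℝ) / ((max R.card 1 : ℕ) : ℝ))) / α)).comp hRmeas
    · -- nonnegativity
      intro S ω
      apply div_nonneg _ hα0.le
      have := Finset.le_sup' (f := fun R : Finset (Fin m) =>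
        ((R ∩ S).card : ℝ) / ((max R.card 1 : ℕ) : ℝ)) (Finset.mem_insert_self ∅ (ℛ ω))
      simpa using this
    · -- integral bound
      intro P hP
      have hkey : ∀ ω, ENNReal.ofReal (((insert ∅ (ℛ ω)).sup' (Finset.insert_nonempty _ _)
          (fun R => ((R ∩ N P).card : ℝ) / ((max R.card 1 : ℕ) : ℝ))) / α)
          = ENNReal.ofReal ((insert ∅ (ℛ ω)).sup' (Finset.insert_nonempty _ _)
          (fun R => ((R ∩ N P).card : ℝ) / ((max R.card 1 : ℕ) : ℝ))) * (ENNReal.ofReal α)⁻¹ := by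
        intro ω
        rw [ENNReal.ofReal_div_of_pos hα0, div_eq_mul_inv]
      calc ∫⁻ ω, ENNReal.ofReal (((insert ∅ (ℛ ω)).sup' (Finset.insert_nonempty _ _)
            (fun R => ((R ∩ N P).card : ℝ) / ((max R.card 1 : ℕ) : ℝ))) / α) ∂P
          = ∫⁻ ω, ENNReal.ofReal ((insert ∅ (ℛ ω)).sup' (Finset.insert_nonempty _ _)
            (fun R => ((R ∩ N P).card : ℝ) / ((max R.card 1 : ℕ) : ℝ))) * (ENNReal.ofReal α)⁻¹ ∂P := by
            exact lintegral_congr hkey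
        _ = (∫⁻ ω, ENNReal.ofReal ((insert ∅ (ℛ ω)).sup' (Finset.insert_nonempty _ _)
            (fun R => ((R ∩ N P).card : ℝ) / ((max R.card 1 : ℕ) : ℝ))) ∂P) * (ENNReal.ofReal α)⁻¹ :=
            lintegral_mul_const' _ _ (ENNReal.inv_ne_top.mpr (ENNReal.ofReal_pos.mpr hα0).ne')
        _ ≤ ENNReal.ofReal α * (ENNReal.ofReal α)⁻¹ := mul_le_mul_left (h P hP) _
        _ = 1 := ENNReal.mul_inv_cancel (ENNReal.ofReal_pos.mpr hα0).ne' ENNReal.ofReal_ne_top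
    · -- domination
      intro ω R hR S
      have hle : ((R ∩ S).card : ℝ) / ((max R.card 1 : ℕ) : ℝ)
          ≤ (insert ∅ (ℛ ω)).sup' (Finset.insert_nonempty _ _)
            (fun R => ((R ∩ S).card : ℝ) / ((max R.card 1 : ℕ) : ℝ)) :=
        Finset.le_sup' (f := fun R : Finset (Fin m) => ((R ∩ S).card : ℝ) / ((max R.card 1 : ℕ) : ℝ)) (Finset.mem_insert_of_mem hR)
      exact div_le_div_of_nonneg_right hle hα0.le
  · rintro ⟨E, hEmeas, hE0, hEint, hEdom⟩ P hP
    have key : ∀ ω, (insert ∅ (ℛ ω)).sup' (Finset.insert_nonempty _ _)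
        (fun R => ((R ∩ N P).card : ℝ) / ((max R.card 1 : ℕ) : ℝ)) ≤ α * E (N P) ω := by
      intro ω
      apply Finset.sup'_le
      intro R hR
      rcases Finset.mem_insert.mp hR with h | h
      · subst h
        simpa using mul_nonneg hα0.le (hE0 (N P) ω)
      · have := hEdom ω R h (N P)
        have := (div_le_iff₀ hα0).mp this
        linarith [this]
    calc ∫⁻ ω, ENNReal.ofReal ((insert ∅ (ℛ ω)).sup' (Finset.insert_nonempty _ _)
          (fun R => ((R ∩ N P).card : ℝ) / ((max R.card 1 : ℕ) : ℝ))) ∂P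
        ≤ ∫⁻ ω, ENNReal.ofReal (α * E (N P) ω) ∂P :=
          lintegral_mono (fun ω => ENNReal.ofReal_le_ofReal (key ω))
      _ = ∫⁻ ω, ENNReal.ofReal α * ENNReal.ofReal (E (N P) ω) ∂P := by
          simp_rw [ENNReal.ofReal_mul hα0.le]
      _ = ENNReal.ofReal α * ∫⁻ ω, ENNReal.ofReal (E (N P) ω) ∂P :=
          lintegral_const_mul' _ _ ENNReal.ofReal_ne_top
      _ ≤ ENNReal.ofReal α * 1 := mul_le_mul_right (hEint P hP) _
      _ = ENNReal.ofReal α := mul_one _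
end

section
/- (Soundness of closed eBH.) Let m ≥ 1, α ∈ (0,1], and let e_1,…,e_m be nonnegative reals. Then the eBH rejection set R^eBH_α is mean-consistent at level α: for every nonempty S ⊆ [m], (1/|S|) ∑_{i∈S} e_i ≥ |R^eBH_α ∩ S| / (α · max(|R^eBH_α|, 1)). -/
/-- Soundness of closed eBH: the eBH rejection set (the indices of the r* largest
e-values, where r* = max({r ∈ [m] : r·e_(r) ≥ m/α} ∪ {0})) is mean-consistent at level α. -/
theorem statement_7 (m : ℕ) (hm : 1 ≤ m) (α : ℝ) (hα : α ∈ Set.Ioc (0 : ℝ) 1)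
    (e : Fin m → ℝ) (he : ∀ i, 0 ≤ e i)
    -- σ sorts the e-values in decreasing order
    (σ : Equiv.Perm (Fin m)) (hσ : ∀ i j : Fin m, i ≤ j → e (σ j) ≤ e (σ i))
    -- eord r = e_(r), the r-th largest value, for 1 ≤ r ≤ m
    (eord : ℕ → ℝ) (heord : ∀ (r : ℕ) (hr : r < m), eord (r + 1) = e (σ ⟨r, hr⟩))
    (rstar : ℕ)
    (hrstar : IsGreatest
      {r : ℕ | r = 0 ∨ (1 ≤ r ∧ r ≤ m ∧ (m : ℝ) / α ≤ (r : ℝ) * eord r)} rstar)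
    -- R^eBH: indices of the r* largest e-values
    (Reb : Finset (Fin m))
    (hReb : Reb = Finset.image (fun j => σ j)
      (Finset.univ.filter fun j : Fin m => (j : ℕ) < rstar)) :
    ∀ S : Finset (Fin m), S.Nonempty →
      ((Reb ∩ S).card : ℝ) / (α * ((max Reb.card 1 : ℕ) : ℝ))
        ≤ (∑ i ∈ S, e i) / (S.card : ℝ) := by
  obtain ⟨hα0, hα1⟩ := hα
  intro S hS
  have hScard : (0:ℝ) < S.card := by exact_mod_cast Finset.card_pos.mpr hS
  have hSm : (S.card : ℝ) ≤ m := by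
    exact_mod_cast (Finset.card_le_univ S).trans_eq (by simp)
  have hsum0 : (0:ℝ) ≤ ∑ i ∈ S, e i := Finset.sum_nonneg fun i _ => he i
  rcases hrstar.1 with h0 | ⟨hr1, hrm, hkey⟩
  · -- rstar = 0, Reb empty
    have hRe : Reb = ∅ := by simp [hReb, h0]
    simp only [hRe, Finset.empty_inter, Finset.card_empty, Nat.cast_zero]
    rw [zero_div]
    positivity
  · -- main case
    have hcard : Reb.card = rstar := by
      rw [hReb, Finset.card_image_of_injective _ σ.injective]
      have : (Finset.univ.filter fun j : Fin m => (j : ℕ) < rstar).card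
          = (Finset.range rstar).card := by
        refine Finset.card_bij (fun a _ => (a : ℕ)) ?_ ?_ ?_
        · intro a ha; simpa using (Finset.mem_filter.mp ha).2
        · intro a _ b _ hab; exact Fin.ext hab
        · intro b hb
          simp only [Finset.mem_range] at hb
          exact ⟨⟨b, lt_of_lt_of_le hb hrm⟩, by simp [hb], rfl⟩
      simpa using this
    have hmax : max Reb.card 1 = rstar := by rw [hcard]; omega
    have hr0 : rstar - 1 < m := by omega
    have heq : eord rstar = e (σ ⟨rstar - 1, hr0⟩) := by
      have := heord (rstar - 1) hr0
      rwa [Nat.sub_add_cancel hr1] at this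
    -- each element of Reb has e-value ≥ eord rstar
    have hge : ∀ i ∈ Reb, eord rstar ≤ e i := by
      intro i hi
      rw [hReb] at hi
      obtain ⟨j, hj, rfl⟩ := Finset.mem_image.mp hi
      have hjlt : (j : ℕ) < rstar := by simpa using (Finset.mem_filter.mp hj).2
      rw [heq]
      exact hσ j ⟨rstar - 1, hr0⟩ (by simp [Fin.le_def]; omega)
    have hlow : ((Reb ∩ S).card : ℝ) * eord rstar ≤ ∑ i ∈ S, e i := by
      calc ((Reb ∩ S).card : ℝ) * eord rstar = ∑ _i ∈ Reb ∩ S, eord rstar := by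
            rw [Finset.sum_const, nsmul_eq_mul]
        _ ≤ ∑ i ∈ Reb ∩ S, e i := by
            refine Finset.sum_le_sum fun i hi => hge i (Finset.mem_inter.mp hi).1
        _ ≤ ∑ i ∈ S, e i := by
            refine Finset.sum_le_sum_of_subset_of_nonneg Finset.inter_subset_right ?_
            intro i _ _; exact he i
    have hrpos : (0:ℝ) < rstar := by exact_mod_cast hr1
    have hmkey : (m : ℝ) ≤ α * ((rstar : ℝ) * eord rstar) := by
      rw [div_le_iff₀ hα0] at hkey; linarith
    have hk0 : (0:ℝ) ≤ ((Reb ∩ S).card : ℝ) := Nat.cast_nonneg _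
    rw [hmax, div_le_div_iff₀ (by positivity) hScard]
    have hkm : ((Reb ∩ S).card : ℝ) * (S.card : ℝ) ≤ ((Reb ∩ S).card : ℝ) * m :=
      mul_le_mul_of_nonneg_left hSm hk0
    nlinarith [mul_le_mul_of_nonneg_left hmkey hk0,
      mul_le_mul_of_nonneg_right hlow (le_of_lt (mul_pos hα0 hrpos))]
end

section
/- Let m > 1 and α ∈ (0,1], and suppose the decreasingly ordered nonnegative values e_(1) ≥ … ≥ e_(m) satisfy (2m − 2i + 1)/(mα) ≤ e_(i) < m/(iα) for every i ∈ [m]. Then the eBH rejection set is empty (r* = 0), while the full set [m] is mean-consistent at level α: for every nonempty S ⊆ [m], (1/|S|) ∑_{i∈S} e_i ≥ |S|/(mα). Moreover the hypotheses are non-void, since (2m − 2i + 1)/m < m/i for every i ∈ [m]. -/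
private lemma fin_strictMono_le {k m : ℕ} (g : Fin k → Fin m) (hg : StrictMono g) :
    ∀ n : ℕ, ∀ h : n < k, n ≤ (g ⟨n, h⟩ : ℕ) := by
  intro n
  induction n with
  | zero => intro h; exact Nat.zero_le _
  | succ n ih =>
    intro h
    have h1 : (⟨n, by omega⟩ : Fin k) < ⟨n + 1, h⟩ := by simp [Fin.lt_def]
    have h2 := hg h1
    have h3 := ih (by omega)
    rw [Fin.lt_def] at h2
    omega

private lemma fin_strictMono_ge {k m : ℕ} (g : Fin k → Fin m) (hg : StrictMono g)
    (x : Fin k) : (g x : ℕ) ≤ m - k + (x : ℕ) := by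
  have hx := x.isLt
  have h1 := fin_strictMono_le g hg (k - 1) (by omega)
  have h2 := (g ⟨k - 1, by omega⟩).isLt
  have hkm : k ≤ m := by omega
  set g' : Fin k → Fin m := fun y => (g y.rev).rev with hg'
  have hg's : StrictMono g' := by
    intro a b hab
    simp only [hg']
    rw [Fin.rev_lt_rev]
    exact hg (by rwa [Fin.rev_lt_rev])
  have h4 := fin_strictMono_le g' hg's (x.rev : ℕ) (x.rev.isLt)
  have h5 : (⟨(x.rev : ℕ), x.rev.isLt⟩ : Fin k) = x.rev := by
    apply Fin.ext; rfl
  rw [h5] at h4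
  simp only [hg', Fin.rev_rev] at h4
  rw [Fin.val_rev, Fin.val_rev] at h4
  have h6 := (g x).isLt
  omega

private lemma sum_odds (k : ℕ) :
    ∑ j ∈ Finset.range k, (2 * (k : ℝ) - 2 * (j : ℕ) - 1) = (k : ℝ) ^ 2 := by
  have hg : (∑ i ∈ Finset.range k, (i : ℝ)) = (k : ℝ) * ((k : ℝ) - 1) / 2 := by
    induction k with
    | zero => simp
    | succ n ih => rw [Finset.sum_range_succ, ih]; push_cast; ring
  have h1 : ∑ j ∈ Finset.range k, (2 * (k : ℝ) - 2 * (j : ℕ) - 1)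
      = ∑ j ∈ Finset.range k, ((2 * (k : ℝ) - 1) - 2 * (j : ℕ)) := by
    apply Finset.sum_congr rfl; intros; ring
  rw [h1, Finset.sum_sub_distrib, Finset.sum_const, ← Finset.mul_sum, hg,
    Finset.card_range, nsmul_eq_mul]
  push_cast
  ring

/-- If the decreasingly ordered e-values satisfy
(2m−2i+1)/(mα) ≤ e_(i) < m/(iα) for all i ∈ [m] (m > 1), then eBH rejects nothing
(no r ∈ [m] has r·e_(r) ≥ m/α), yet the full set [m] is mean-consistent at level α;
moreover the hypotheses are non-void since (2m−2i+1)/m < m/i for every i ∈ [m]. -/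
theorem statement_8 (m : ℕ) (hm : 1 < m) (α : ℝ) (hα : α ∈ Set.Ioc (0 : ℝ) 1)
    (e : Fin m → ℝ) (he : ∀ i, 0 ≤ e i)
    -- σ sorts the e-values in decreasing order
    (σ : Equiv.Perm (Fin m)) (hσ : ∀ i j : Fin m, i ≤ j → e (σ j) ≤ e (σ i))
    -- eord r = e_(r), the r-th largest value, for 1 ≤ r ≤ m
    (eord : ℕ → ℝ) (heord : ∀ (r : ℕ) (hr : r < m), eord (r + 1) = e (σ ⟨r, hr⟩))
    (hbound : ∀ r : ℕ, 1 ≤ r → r ≤ m →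
      (2 * (m : ℝ) - 2 * r + 1) / ((m : ℝ) * α) ≤ eord r ∧
      eord r < (m : ℝ) / ((r : ℝ) * α)) :
    -- eBH rejects nothing: r* = 0
    (∀ r : ℕ, 1 ≤ r → r ≤ m → ¬ ((m : ℝ) / α ≤ (r : ℝ) * eord r)) ∧
    -- the full set [m] is mean-consistent: (1/|S|) ∑_{i∈S} e_i ≥ |S|/(mα)
    (∀ S : Finset (Fin m), S.Nonempty →
      (S.card : ℝ) / ((m : ℝ) * α) ≤ (∑ i ∈ S, e i) / (S.card : ℝ)) ∧
    -- non-voidness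
    (∀ i : ℕ, 1 ≤ i → i ≤ m → (2 * (m : ℝ) - 2 * i + 1) / (m : ℝ) < (m : ℝ) / (i : ℝ)) := by
  obtain ⟨hα0, hα1⟩ := hα
  have hm0 : (0 : ℝ) < m := by positivity
  refine ⟨?_, ?_, ?_⟩
  · -- part 1
    intro r hr1 hrm hle
    have hr0 : (0 : ℝ) < r := by exact_mod_cast hr1
    have h2 := (hbound r hr1 hrm).2
    have h3 : (r : ℝ) * eord r < (r : ℝ) * ((m : ℝ) / ((r : ℝ) * α)) :=
      mul_lt_mul_of_pos_left h2 hr0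
    have heq : (r : ℝ) * ((m : ℝ) / ((r : ℝ) * α)) = (m : ℝ) / α := by
      field_simp
    rw [heq] at h3
    linarith
  · -- part 2
    intro S hS
    set k := S.card with hk
    have hk1 : 1 ≤ k := Finset.card_pos.mpr hS
    have hkm : k ≤ m := by
      simpa using Finset.card_le_card (Finset.subset_univ S)
    set T : Finset (Fin m) := S.image σ.symm with hT
    have hTcard : T.card = k := Finset.card_image_of_injective _ σ.symm.injective
    have hsum1 : ∑ i ∈ S, e i = ∑ j ∈ T, e (σ j) := by
      rw [hT, Finset.sum_image (fun a _ b _ h => σ.symm.injective h)]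
      simp
    set g := T.orderEmbOfFin hTcard with hgdef
    have hTim : T = Finset.image g Finset.univ := by
      ext a
      simp only [Finset.mem_image, Finset.mem_univ, true_and]
      constructor
      · intro ha
        have h2 : a ∈ Set.range g := by
          rw [hgdef, Finset.range_orderEmbOfFin]; exact ha
        obtain ⟨x, hx⟩ := h2
        exact ⟨x, hx⟩
      · rintro ⟨x, rfl⟩
        exact Finset.orderEmbOfFin_mem T hTcard x
    have hsum2 : ∑ j ∈ T, e (σ j) = ∑ x : Fin k, e (σ (g x)) := by
      rw [hTim, Finset.sum_image (fun a _ b _ h => g.injective h)]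
    have hub : ∀ x : Fin k, (g x : ℕ) ≤ m - k + (x : ℕ) :=
      fin_strictMono_ge g g.strictMono
    have key : ∀ x : Fin k, e (σ ⟨m - k + (x : ℕ), by omega⟩) ≤ e (σ (g x)) := by
      intro x
      exact hσ (g x) ⟨m - k + (x : ℕ), by omega⟩ (by rw [Fin.le_def]; exact hub x)
    have hlow : ∀ x : Fin k,
        (2 * (k : ℝ) - 2 * (x : ℕ) - 1) / ((m : ℝ) * α) ≤ e (σ ⟨m - k + (x : ℕ), by omega⟩) := by
      intro x
      have hx := x.isLt
      have h1 := (hbound (m - k + (x : ℕ) + 1) (by omega) (by omega)).1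
      rw [heord (m - k + (x : ℕ)) (by omega)] at h1
      refine le_trans (le_of_eq ?_) h1
      congr 1
      push_cast [Nat.cast_sub hkm]
      ring
    have hsum3 : ((k : ℝ) ^ 2) / ((m : ℝ) * α) ≤ ∑ i ∈ S, e i := by
      rw [hsum1, hsum2]
      calc ((k : ℝ) ^ 2) / ((m : ℝ) * α)
          = ∑ x : Fin k, (2 * (k : ℝ) - 2 * (x : ℕ) - 1) / ((m : ℝ) * α) := by
            rw [← Finset.sum_div,
              Fin.sum_univ_eq_sum_range (fun j : ℕ => 2 * (k : ℝ) - 2 * (j : ℕ) - 1),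
              sum_odds]
        _ ≤ ∑ x : Fin k, e (σ (g x)) :=
            Finset.sum_le_sum (fun x _ => le_trans (hlow x) (key x))
    have hk0 : (0 : ℝ) < k := by exact_mod_cast hk1
    rw [div_le_div_iff₀ (by positivity) hk0]
    calc (k : ℝ) * k = ((k : ℝ) ^ 2 / ((m : ℝ) * α)) * ((m : ℝ) * α) := by
          field_simp
      _ ≤ (∑ i ∈ S, e i) * ((m : ℝ) * α) :=
          mul_le_mul_of_nonneg_right hsum3 (by positivity)
  · -- part 3
    intro i hi1 him
    have hi0 : (0 : ℝ) < i := by exact_mod_cast hi1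
    rw [div_lt_div_iff₀ hm0 hi0]
    rcases eq_or_lt_of_le hi1 with h1 | h2
    · have hi : (i : ℝ) = 1 := by exact_mod_cast h1.symm
      have hm2 : (2 : ℝ) ≤ m := by exact_mod_cast hm
      rw [hi]
      nlinarith [mul_nonneg (by linarith : (0:ℝ) ≤ (m:ℝ) - 2) (by linarith : (0:ℝ) ≤ (m:ℝ))]
    · have h2' : (2 : ℝ) ≤ i := by exact_mod_cast h2
      have him' : (i : ℝ) ≤ m := by exact_mod_cast him
      nlinarith [sq_nonneg ((m : ℝ) - i),
        mul_nonneg (by linarith : (0:ℝ) ≤ (i:ℝ) - 2) (by linarith : (0:ℝ) ≤ (i:ℝ) + 1)]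
end

section
/- (Compound self-consistency equals compound mean-consistency.) Let m ≥ 1, α ∈ (0,1], and let ẽ_1,…,ẽ_m be nonnegative reals. For S ⊆ [m] define e_S = (1/m) ∑_{i∈S} ẽ_i. Then {R ⊆ [m] : ẽ_i ≥ m/(α·|R|) for every i ∈ R} = {R ⊆ [m] : e_S ≥ FDP_S(R)/α for every S ⊆ [m]}. -/
/-- For compound e-values ẽ_1,…,ẽ_m with e_S = (1/m) ∑_{i∈S} ẽ_i, the compound
self-consistent sets coincide with the compound mean-consistent sets:
{R : ẽ_i ≥ m/(α|R|) ∀ i ∈ R} = {R : e_S ≥ FDP_S(R)/α ∀ S}. -/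
theorem statement_9 (m : ℕ) (hm : 1 ≤ m) (α : ℝ) (hα : α ∈ Set.Ioc (0 : ℝ) 1)
    (et : Fin m → ℝ) (het : ∀ i, 0 ≤ et i) :
    {R : Finset (Fin m) | ∀ i ∈ R, (m : ℝ) / (α * (R.card : ℝ)) ≤ et i} =
    {R : Finset (Fin m) | ∀ S : Finset (Fin m),
      ((R ∩ S).card : ℝ) / ((max R.card 1 : ℕ) : ℝ) / α ≤ (∑ i ∈ S, et i) / (m : ℝ)} := by
  obtain ⟨hα0, hα1⟩ := hα
  have hm0 : (0 : ℝ) < m := by exact_mod_cast hm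
  ext R
  simp only [Set.mem_setOf_eq]
  constructor
  · intro h S
    rcases Nat.eq_zero_or_pos R.card with hr | hr
    · have hRe : R = ∅ := Finset.card_eq_zero.mp hr
      subst hRe
      simp only [Finset.empty_inter, Finset.card_empty, Nat.cast_zero, zero_div]
      have : 0 ≤ ∑ i ∈ S, et i := Finset.sum_nonneg fun i _ => het i
      positivity
    · have hrpos : (0 : ℝ) < R.card := by exact_mod_cast hr
      rw [max_eq_left hr]
      have hsum : ((R ∩ S).card : ℝ) * ((m : ℝ) / (α * (R.card : ℝ))) ≤ ∑ i ∈ S, et i := by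
        calc ((R ∩ S).card : ℝ) * ((m : ℝ) / (α * (R.card : ℝ)))
            = ∑ _i ∈ R ∩ S, ((m : ℝ) / (α * (R.card : ℝ))) := by
              rw [Finset.sum_const, nsmul_eq_mul]
          _ ≤ ∑ i ∈ R ∩ S, et i := by
              apply Finset.sum_le_sum
              intro i hi
              exact h i (Finset.mem_inter.mp hi).1
          _ ≤ ∑ i ∈ S, et i := by
              apply Finset.sum_le_sum_of_subset_of_nonneg (Finset.inter_subset_right)
              intro i _ _; exact het i
      rw [div_div, div_le_div_iff₀ (by positivity) hm0]
      calc ((R ∩ S).card : ℝ) * m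
          = (((R ∩ S).card : ℝ) * ((m : ℝ) / (α * (R.card : ℝ)))) * ((R.card : ℝ) * α) := by
            rw [mul_assoc, mul_comm (R.card : ℝ) α,
              div_mul_cancel₀ _ (by positivity : α * (R.card : ℝ) ≠ 0)]
        _ ≤ (∑ i ∈ S, et i) * ((R.card : ℝ) * α) := by
            apply mul_le_mul_of_nonneg_right hsum
            positivity
  · intro h i hi
    have hr : 1 ≤ R.card := Finset.card_pos.mpr ⟨i, hi⟩
    have hrpos : (0 : ℝ) < R.card := by exact_mod_cast hr
    have := h {i}
    rw [max_eq_left hr] at this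
    have hcap : R ∩ {i} = {i} := by
      rw [Finset.inter_eq_right]
      simpa using hi
    rw [hcap] at this
    simp only [Finset.card_singleton, Nat.cast_one, Finset.sum_singleton] at this
    rw [div_div, div_le_div_iff₀ (by positivity) hm0] at this
    rw [div_le_iff₀ (by positivity)]
    calc (m : ℝ) = 1 * m := (one_mul _).symm
      _ ≤ et i * ((R.card : ℝ) * α) := this
      _ = et i * (α * R.card) := by ring
end

section
/- (Soundness of closed BY.) Let m ≥ 1, α ∈ (0,1], and p_1,…,p_m ∈ [0,1]. Let h_k = ∑_{i=1}^k 1/i denote the k-th harmonic number. Let p_(1) ≤ … ≤ p_(m) be the values sorted in increasing order, let R^(r) ⊆ [m] be a set of indices of the r smallest values (R^(0) = ∅), and let R^BY_α = R^(r*) with r* = max({r ∈ [m] : p_(r) ≤ α·r/(m·h_m)} ∪ {0}) be the Benjamini–Yekutieli rejection set. For nonempty S ⊆ [m] define e_S = ∑_{i∈S} 1{h_{|S|}·p_i ≤ α} / (α · max(⌈|S|·h_{|S|}·p_i/α⌉, 1)). Then for every nonempty S ⊆ [m], α·e_S ≥ |S ∩ R^BY_α| / max(|R^BY_α|, 1).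 -/
/-- The k-th harmonic number h_k = ∑_{i=1}^k 1/i. -/
noncomputable def harm (k : ℕ) : ℝ := ∑ i ∈ Finset.range k, (1 : ℝ) / ((i : ℝ) + 1)

lemma harm_nonneg (k : ℕ) : 0 ≤ harm k :=
  Finset.sum_nonneg fun i _ => by positivity

lemma harm_mono : Monotone harm := fun a b h =>
  Finset.sum_le_sum_of_subset_of_nonneg (Finset.range_subset_range.2 h)
    (fun i _ _ => by positivity)

lemma harm_pos {k : ℕ} (hk : 1 ≤ k) : 0 < harm k := by
  have h1 : harm 1 = 1 := by simp [harm]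
  have := harm_mono hk
  linarith

/-- Soundness of closed BY: with local e-values
e_S = ∑_{i∈S} 1{h_{|S|}p_i ≤ α}/(α·max(⌈|S|h_{|S|}p_i/α⌉,1)), the BY rejection set satisfies
α·e_S ≥ |S ∩ R^BY|/max(|R^BY|,1) for every nonempty S. -/
theorem statement_10 (m : ℕ) (hm : 1 ≤ m) (α : ℝ) (hα : α ∈ Set.Ioc (0 : ℝ) 1)
    (p : Fin m → ℝ) (hp : ∀ i, p i ∈ Set.Icc (0 : ℝ) 1)
    -- σ sorts the p-values in increasing order
    (σ : Equiv.Perm (Fin m)) (hσ : ∀ i j : Fin m, i ≤ j → p (σ i) ≤ p (σ j))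
    -- pord r = p_(r), the r-th smallest value, for 1 ≤ r ≤ m
    (pord : ℕ → ℝ) (hpord : ∀ (r : ℕ) (hr : r < m), pord (r + 1) = p (σ ⟨r, hr⟩))
    (rstar : ℕ)
    (hrstar : IsGreatest
      {r : ℕ | r = 0 ∨ (1 ≤ r ∧ r ≤ m ∧ pord r ≤ α * (r : ℝ) / ((m : ℝ) * harm m))} rstar)
    -- R^BY: indices of the r* smallest p-values
    (Rby : Finset (Fin m))
    (hRby : Rby = Finset.image (fun j => σ j)
      (Finset.univ.filter fun j : Fin m => (j : ℕ) < rstar)) :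
    ∀ S : Finset (Fin m), S.Nonempty →
      ((S ∩ Rby).card : ℝ) / ((max Rby.card 1 : ℕ) : ℝ) ≤
        α * ∑ i ∈ S,
          (if harm S.card * p i ≤ α then (1 : ℝ) else 0) /
            (α * ((max ⌈(S.card : ℝ) * harm S.card * p i / α⌉ 1 : ℤ) : ℝ)) := by
  intro S hS
  have hα0 : (0 : ℝ) < α := hα.1
  set s := S.card with hsdef
  have hs1 : 1 ≤ s := hS.card_pos
  have hsm : s ≤ m := by
    have := Finset.card_le_card (Finset.subset_univ S)
    simpa using this
  have hharm : harm s ≤ harm m := harm_mono hsm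
  have hmpos : (0 : ℝ) < m := by exact_mod_cast hm
  have hhm : (0 : ℝ) < harm m := harm_pos hm
  -- denominators
  have hD : ∀ i : Fin m, (1 : ℝ) ≤ ((max ⌈(s : ℝ) * harm s * p i / α⌉ 1 : ℤ) : ℝ) := by
    intro i
    exact_mod_cast le_max_right _ 1
  -- rewrite RHS
  have hrw : α * ∑ i ∈ S,
      (if harm s * p i ≤ α then (1 : ℝ) else 0) /
        (α * ((max ⌈(s : ℝ) * harm s * p i / α⌉ 1 : ℤ) : ℝ)) =
      ∑ i ∈ S, (if harm s * p i ≤ α then (1 : ℝ) else 0) /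
        ((max ⌈(s : ℝ) * harm s * p i / α⌉ 1 : ℤ) : ℝ) := by
    rw [Finset.mul_sum]
    refine Finset.sum_congr rfl fun i _ => ?_
    have hDi : ((max ⌈(s : ℝ) * harm s * p i / α⌉ 1 : ℤ) : ℝ) ≠ 0 := by
      have := hD i; linarith
    field_simp
  rw [hrw]
  have hterm_nonneg : ∀ i ∈ S, (0 : ℝ) ≤
      (if harm s * p i ≤ α then (1 : ℝ) else 0) /
        ((max ⌈(s : ℝ) * harm s * p i / α⌉ 1 : ℤ) : ℝ) := by
    intro i _
    have := hD i
    positivity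
  rcases Nat.eq_zero_or_pos rstar with hr0 | hr1
  · -- rstar = 0 : Rby empty
    have hRe : Rby = ∅ := by
      rw [hRby, hr0]
      simp
    rw [hRe]
    simp only [Finset.inter_empty, Finset.card_empty, Nat.cast_zero, zero_div]
    exact Finset.sum_nonneg hterm_nonneg
  · -- rstar ≥ 1
    have hrm : rstar ≤ m := by
      rcases hrstar.1 with h | h
      · omega
      · exact h.2.1
    have hple : pord rstar ≤ α * (rstar : ℝ) / ((m : ℝ) * harm m) := by
      rcases hrstar.1 with h | h
      · omega
      · exact h.2.2
    -- the card of Rby is rstar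
    have hcard : Rby.card = rstar := by
      rw [hRby, Finset.card_image_of_injective _ (σ.injective)]
      rw [← Finset.card_range rstar]
      apply Finset.card_bij (fun (j : Fin m) _ => (j : ℕ))
      · intro a ha
        simp only [Finset.mem_filter] at ha
        simpa using ha.2
      · intro a _ b _ hab
        exact Fin.val_injective hab
      · intro b hb
        have hbr : b < rstar := Finset.mem_range.1 hb
        exact ⟨⟨b, lt_of_lt_of_le hbr hrm⟩, by simp [hbr], rfl⟩
    -- key p-value bound for members of Rby
    have hpi : ∀ i ∈ Rby, p i * ((m : ℝ) * harm m) ≤ α * rstar := by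
      intro i hi
      rw [hRby] at hi
      obtain ⟨j, hj, hji⟩ := Finset.mem_image.1 hi
      simp only [Finset.mem_filter] at hj
      have hjr : (j : ℕ) < rstar := hj.2
      have hr1m : rstar - 1 < m := by omega
      have hle : p i ≤ pord rstar := by
        rw [← hji]
        have : pord ((rstar - 1) + 1) = p (σ ⟨rstar - 1, hr1m⟩) := hpord (rstar - 1) hr1m
        rw [show (rstar - 1) + 1 = rstar by omega] at this
        rw [this]
        exact hσ j ⟨rstar - 1, hr1m⟩ (by simp [Fin.le_def]; omega)
      have : pord rstar * ((m : ℝ) * harm m) ≤ α * rstar := by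
        rw [div_eq_mul_inv] at hple
        have hmh : (0 : ℝ) < (m : ℝ) * harm m := by positivity
        calc pord rstar * ((m : ℝ) * harm m)
            ≤ (α * rstar * ((m : ℝ) * harm m)⁻¹) * ((m : ℝ) * harm m) :=
              mul_le_mul_of_nonneg_right hple (le_of_lt hmh)
          _ = α * rstar := by field_simp
      calc p i * ((m : ℝ) * harm m) ≤ pord rstar * ((m : ℝ) * harm m) := by
            apply mul_le_mul_of_nonneg_right hle (by positivity)
        _ ≤ α * rstar := this
    -- each term for i ∈ S ∩ Rby is at least 1 / rstar
    have hrstar_pos : (0 : ℝ) < rstar := by exact_mod_cast hr1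
    have hterm : ∀ i ∈ S ∩ Rby, (1 : ℝ) / rstar ≤
        (if harm s * p i ≤ α then (1 : ℝ) else 0) /
          ((max ⌈(s : ℝ) * harm s * p i / α⌉ 1 : ℤ) : ℝ) := by
      intro i hi
      have hiR : i ∈ Rby := (Finset.mem_inter.1 hi).2
      have hkey := hpi i hiR
      have hp0 : 0 ≤ p i := (hp i).1
      have hsr : (s : ℝ) ≤ (m : ℝ) := by exact_mod_cast hsm
      have hrr : (rstar : ℝ) ≤ (m : ℝ) := by exact_mod_cast hrm
      have hhs : 0 ≤ harm s := harm_nonneg s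
      -- indicator is 1
      have hind : harm s * p i ≤ α := by
        nlinarith [mul_le_mul_of_nonneg_right hharm hp0]
      rw [if_pos hind]
      -- ceiling bound
      have hceil : ⌈(s : ℝ) * harm s * p i / α⌉ ≤ (rstar : ℤ) := by
        rw [Int.ceil_le]
        push_cast
        rw [div_le_iff₀ hα0]
        nlinarith [mul_le_mul_of_nonneg_right hharm hp0, mul_le_mul_of_nonneg_right hhs hp0]
      have hmax : ((max ⌈(s : ℝ) * harm s * p i / α⌉ 1 : ℤ) : ℝ) ≤ (rstar : ℝ) := by
        have : (max ⌈(s : ℝ) * harm s * p i / α⌉ 1 : ℤ) ≤ (rstar : ℤ) :=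
          max_le hceil (by exact_mod_cast hr1)
        exact_mod_cast this
      have hD1 := hD i
      apply one_div_le_one_div_of_le (by linarith) hmax
    -- combine
    have hsum : ((S ∩ Rby).card : ℝ) * ((1 : ℝ) / rstar) ≤
        ∑ i ∈ S, (if harm s * p i ≤ α then (1 : ℝ) else 0) /
          ((max ⌈(s : ℝ) * harm s * p i / α⌉ 1 : ℤ) : ℝ) := by
      calc ((S ∩ Rby).card : ℝ) * ((1 : ℝ) / rstar)
          ≤ ∑ i ∈ S ∩ Rby, (if harm s * p i ≤ α then (1 : ℝ) else 0) /
            ((max ⌈(s : ℝ) * harm s * p i / α⌉ 1 : ℤ) : ℝ) := by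
            rw [← nsmul_eq_mul]
            exact Finset.card_nsmul_le_sum _ _ _ hterm
        _ ≤ _ := Finset.sum_le_sum_of_subset_of_nonneg Finset.inter_subset_left
              (fun i hi _ => hterm_nonneg i hi)
    have hmaxc : (max Rby.card 1) = rstar := by
      rw [hcard]; omega
    rw [hmaxc, div_eq_mul_one_div]
    exact hsum
end

section
/- (Su calibrator.) Let α ∈ (0,1] and let ℓ ≥ 1 be a real number satisfying ℓ = 1 + log(ℓ/α) (this is the value ℓ_α = −w(−α/e), where w is the −1 branch of the Lambert W function). Let (Ω, 𝒜, P) be a probability space and let p be a nonnegative measurable random variable that is superuniform, i.e., P(p ≤ t) ≤ t for every t ∈ [0,1]. Then E_P[ 1 / max(ℓ·p, α) ] ≤ 1; in other words, x ↦ 1/max(ℓ·x, α) is a p-to-e calibrator. -/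
open MeasureTheory Set
open scoped ENNReal

/-!
By the layer-cake formula, `E[f] = ∫₀^∞ P(f > t) dt` for `f = 1 / max (ℓ p) α`. Since `f ≤ 1/α`
the tail vanishes beyond `1/α`; on `(0, 1/ℓ]` it is at most `1`; and on `(1/ℓ, 1/α]` the event
`f > t` forces `p ≤ 1/(ℓ t) ≤ 1`, so superuniformity bounds the tail by `1/(ℓ t)`. Altogether
`E[f] ≤ 1/ℓ + log(ℓ/α)/ℓ`, which is `1` exactly when `ℓ = 1 + log(ℓ/α)`.
-/

lemma lintegral_ofReal_mul_inv_Ioc {a b c : ℝ} (hc : 0 ≤ c) (ha : 0 < a) (hab : a ≤ b) :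
    ∫⁻ t in Ioc a b, ENNReal.ofReal (c * t⁻¹) = ENNReal.ofReal (c * Real.log (b / a)) := by
  have h0 : (0 : ℝ) ∉ uIcc a b := by
    rw [uIcc_of_le hab]
    exact fun h => ha.not_ge h.1
  have hinv : IntervalIntegrable (fun t : ℝ => t⁻¹) volume a b :=
    intervalIntegral.intervalIntegrable_inv (fun t ht h => h0 (h ▸ ht)) continuousOn_id
  rw [← ofReal_integral_eq_lintegral_ofReal, ← intervalIntegral.integral_of_le hab,
    intervalIntegral.integral_const_mul, integral_inv h0]
  · exact (hinv.const_mul c).1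
  · filter_upwards [ae_restrict_mem measurableSet_Ioc] with t ht
    have : 0 < t := ha.trans ht.1
    positivity

section SuCalibrator

variable {Ω : Type*} {α ℓ : ℝ} (p : Ω → ℝ)

lemma setOf_lt_one_div_max_eq_empty (hα : 0 < α) {t : ℝ} (ht : α⁻¹ ≤ t) :
    {ω | t < 1 / max (ℓ * p ω) α} = ∅ := by
  refine eq_empty_of_forall_notMem fun ω hω => ?_
  have : 1 / max (ℓ * p ω) α ≤ α⁻¹ := by
    rw [one_div]
    exact inv_anti₀ hα (le_max_right _ _)
  exact (hω.trans_le this).not_ge ht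

lemma setOf_lt_one_div_max_subset (hα : 0 < α) (hℓ : 0 < ℓ) {t : ℝ} (ht : 0 < t) :
    {ω | t < 1 / max (ℓ * p ω) α} ⊆ {ω | p ω ≤ (ℓ * t)⁻¹} := by
  intro ω hω
  rw [Set.mem_ofPred_eq, one_div] at hω
  have hmax : max (ℓ * p ω) α < t⁻¹ := (lt_inv_comm₀ ht (lt_max_of_lt_right hα)).mp hω
  have : ℓ * p ω < ℓ * (ℓ * t)⁻¹ := by
    rw [mul_inv, ← mul_assoc, mul_inv_cancel₀ hℓ.ne', one_mul]
    exact (le_max_left _ _).trans_lt hmax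
  exact (lt_of_mul_lt_mul_left this hℓ.le).le

lemma setLIntegral_Ioc_meas_lt_one_div_max_le [MeasurableSpace Ω] (P : Measure Ω)
    (hα : 0 < α) (hαℓ : α ≤ ℓ)
    (hsup : ∀ t : ℝ, 0 ≤ t → t ≤ 1 → P {ω | p ω ≤ t} ≤ ENNReal.ofReal t) :
    ∫⁻ t in Ioc ℓ⁻¹ α⁻¹, P {ω | t < 1 / max (ℓ * p ω) α} ≤
      ENNReal.ofReal (ℓ⁻¹ * Real.log (ℓ / α)) := by
  have hℓ : 0 < ℓ := hα.trans_le hαℓ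
  have htail : ∀ t ∈ Ioc ℓ⁻¹ α⁻¹,
      P {ω | t < 1 / max (ℓ * p ω) α} ≤ ENNReal.ofReal (ℓ⁻¹ * t⁻¹) := by
    intro t ht
    have ht0 : 0 < t := (inv_pos.mpr hℓ).trans ht.1
    have hℓt : (ℓ * t)⁻¹ ≤ 1 := inv_le_one_of_one_le₀ ((inv_lt_iff_one_lt_mul₀' hℓ).mp ht.1).le
    calc P {ω | t < 1 / max (ℓ * p ω) α}
        ≤ P {ω | p ω ≤ (ℓ * t)⁻¹} := measure_mono (setOf_lt_one_div_max_subset p hα hℓ ht0)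
      _ ≤ ENNReal.ofReal (ℓ⁻¹ * t⁻¹) := mul_inv ℓ t ▸ hsup _ (by positivity) hℓt
  calc ∫⁻ t in Ioc ℓ⁻¹ α⁻¹, P {ω | t < 1 / max (ℓ * p ω) α}
      ≤ ∫⁻ t in Ioc ℓ⁻¹ α⁻¹, ENNReal.ofReal (ℓ⁻¹ * t⁻¹) :=
        setLIntegral_mono (by fun_prop) htail
    _ = ENNReal.ofReal (ℓ⁻¹ * Real.log (ℓ / α)) := by
        rw [lintegral_ofReal_mul_inv_Ioc (inv_nonneg.mpr hℓ.le) (inv_pos.mpr hℓ)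
          (inv_anti₀ hα hαℓ), inv_div_inv]

lemma setLIntegral_Ioi_meas_lt_one_div_max_eq_zero [MeasurableSpace Ω] (P : Measure Ω)
    (hα : 0 < α) : ∫⁻ t in Ioi α⁻¹, P {ω | t < 1 / max (ℓ * p ω) α} = 0 := by
  refine (setLIntegral_congr_fun measurableSet_Ioi fun t ht => ?_).trans lintegral_zero
  rw [setOf_lt_one_div_max_eq_empty p hα ht.le, measure_empty]

end SuCalibrator

theorem statement_12_general (α : ℝ) (hα : α ∈ Set.Ioc (0 : ℝ) 1)
    (ℓ : ℝ) (hℓ1 : 1 ≤ ℓ) (hℓ : ℓ = 1 + Real.log (ℓ / α))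
    {Ω : Type*} [MeasurableSpace Ω] (P : Measure Ω) [IsProbabilityMeasure P]
    (p : Ω → ℝ) (hpmeas : Measurable p)
    (hsup : ∀ t : ℝ, 0 ≤ t → t ≤ 1 → P {ω | p ω ≤ t} ≤ ENNReal.ofReal t) :
    ∫⁻ ω, ENNReal.ofReal (1 / max (ℓ * p ω) α) ∂P ≤ 1 := by
  obtain ⟨hα0, hα1⟩ := hα
  have hℓ0 : 0 < ℓ := one_pos.trans_le hℓ1
  have hαℓ : α ≤ ℓ := hα1.trans hℓ1
  set F : ℝ → ℝ≥0∞ := fun t => P {ω | t < 1 / max (ℓ * p ω) α}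
  have hF_small : ∫⁻ t in Ioc 0 ℓ⁻¹, F t ≤ ENNReal.ofReal ℓ⁻¹ := by
    refine (lintegral_mono fun t => prob_le_one).trans_eq ?_
    rw [setLIntegral_one, Real.volume_Ioc, sub_zero]
  rw [lintegral_eq_lintegral_meas_lt P (ae_of_all _ fun ω => by positivity) (by fun_prop),
    ← Ioc_union_Ioi_eq_Ioi (inv_pos.mpr hα0).le,
    ← Ioc_union_Ioc_eq_Ioc (inv_pos.mpr hℓ0).le (inv_anti₀ hα0 hαℓ)]
  calc ∫⁻ t in Ioc 0 ℓ⁻¹ ∪ Ioc ℓ⁻¹ α⁻¹ ∪ Ioi α⁻¹, F t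
      ≤ (∫⁻ t in Ioc 0 ℓ⁻¹, F t) + (∫⁻ t in Ioc ℓ⁻¹ α⁻¹, F t) + ∫⁻ t in Ioi α⁻¹, F t :=
        (lintegral_union_le _ _ _).trans (add_le_add_left (lintegral_union_le _ _ _) _)
    _ ≤ ENNReal.ofReal ℓ⁻¹ + ENNReal.ofReal (ℓ⁻¹ * Real.log (ℓ / α)) + 0 := by
        gcongr
        · exact setLIntegral_Ioc_meas_lt_one_div_max_le p P hα0 hαℓ hsup
        · exact (setLIntegral_Ioi_meas_lt_one_div_max_eq_zero p P hα0).le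
    _ = 1 := by
        have hlog : Real.log (ℓ / α) = ℓ - 1 := by linarith
        rw [add_zero, hlog,
          ← ENNReal.ofReal_add (by positivity) (mul_nonneg (by positivity) (by linarith)),
          ← mul_one_add, add_sub_cancel, inv_mul_cancel₀ hℓ0.ne', ENNReal.ofReal_one]

/-- The Su calibrator: if ℓ ≥ 1 satisfies ℓ = 1 + log(ℓ/α) and p is a
nonnegative superuniform random variable, then E[1/max(ℓ·p, α)] ≤ 1, i.e.
x ↦ 1/max(ℓ·x, α) is a p-to-e calibrator. -/
theorem statement_12 (α : ℝ) (hα : α ∈ Set.Ioc (0 : ℝ) 1)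
    (ℓ : ℝ) (hℓ1 : 1 ≤ ℓ) (hℓ : ℓ = 1 + Real.log (ℓ / α))
    {Ω : Type*} [MeasurableSpace Ω] (P : Measure Ω) [IsProbabilityMeasure P]
    (p : Ω → ℝ) (hpmeas : Measurable p) (hp0 : ∀ ω, 0 ≤ p ω)
    (hsup : ∀ t : ℝ, 0 ≤ t → t ≤ 1 → P {ω | p ω ≤ t} ≤ ENNReal.ofReal t) :
    ∫⁻ ω, ENNReal.ofReal (1 / max (ℓ * p ω) α) ∂P ≤ 1 :=
  statement_12_general α hα ℓ hℓ1 hℓ P p hpmeas hsup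
end

section
/- (Soundness of closed Su.) Let m ≥ 1, α ∈ (0,1], ℓ > 0, and p_1,…,p_m ∈ [0,1]. For nonempty S ⊆ [m] let p_{i:S} denote the i-th smallest value among {p_j : j ∈ S} and define the Simes p-value p_S = min_{1 ≤ i ≤ |S|} |S|·p_{i:S}/i, and set e_S = 1/max(ℓ·p_S, α). Let p_(1) ≤ … ≤ p_(m) be the globally sorted values, R^(r) a set of indices of the r smallest values (R^(0) = ∅), and let R^Su = R^(r*) with r* = max({r ∈ [m] : p_(r) ≤ α·r/(ℓ·m)} ∪ {0}) (the BH rejection set at level α/ℓ). Then for every nonempty S ⊆ [m], e_S ≥ |S ∩ R^Su| / (α · max(|R^Su|, 1)). -/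
/-- The i-th smallest value among {p_j : j ∈ S} (1-indexed). -/
noncomputable def orderStat {m : ℕ} (p : Fin m → ℝ) (S : Finset (Fin m)) (i : ℕ) : ℝ :=
  ((S.val.map p).sort (· ≤ ·)).getD (i - 1) 0

/-- The Simes p-value p_S = min_{1 ≤ i ≤ |S|} |S|·p_{i:S}/i (set to 1 for S = ∅). -/
noncomputable def simes {m : ℕ} (p : Fin m → ℝ) (S : Finset (Fin m)) : ℝ :=
  if h : S.Nonempty then
    (Finset.Icc 1 S.card).inf'
      (Finset.nonempty_Icc.mpr (Finset.one_le_card.mpr h))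
      (fun i => (S.card : ℝ) * orderStat p S i / (i : ℝ))
  else 1

/-!
Let `R` be the step-up rejection set, `r = |R|` and `k = |S ∩ R| > 0`. Every index in `R` has
p-value at most the step-up threshold `t = α r / (ℓ m)`, so `S` holds at least `k` p-values
`≤ t`, i.e. `p_{k:S} ≤ t`. Simes then gives `ℓ p_S ≤ ℓ |S| t / k ≤ α r / k`, and `α ≤ α r / k`
because `k ≤ r`; hence `max (ℓ p_S) α ≤ α r / k`, which is the claim.
-/

open Finset

theorem List.countP_le_le_of_lt_getElem {α : Type*} [LinearOrder α] {l : List α}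
    (hl : l.Pairwise (· ≤ ·)) {k : ℕ} (hk : k < l.length) {B : α} (hB : B < l[k]) :
    l.countP (fun x => decide (x ≤ B)) ≤ k := by
  have hdrop : (l.drop k).countP (fun x => decide (x ≤ B)) = 0 := by
    refine List.countP_eq_zero.2 fun x hx => ?_
    obtain ⟨i, hi, rfl⟩ := List.getElem_of_mem hx
    have hki : k + i < l.length := by rw [List.length_drop] at hi; omega
    have : l[k] ≤ l[k + i] := hl.rel_get_of_le (a := ⟨k, hk⟩) (b := ⟨k + i, hki⟩) (by simp)
    simp only [List.getElem_drop, decide_eq_true_eq, not_le]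
    exact hB.trans_le this
  calc l.countP (fun x => decide (x ≤ B))
      = (l.take k ++ l.drop k).countP (fun x => decide (x ≤ B)) := by rw [List.take_append_drop]
    _ = (l.take k).countP (fun x => decide (x ≤ B)) := by rw [List.countP_append, hdrop, add_zero]
    _ ≤ k := List.countP_le_length.trans (List.length_take_le _ _)

theorem Multiset.sort_getD_le_of_lt_card_filter {α : Type*} [LinearOrder α] {s : Multiset α}
    {k : ℕ} {B : α} (h : k < card (s.filter (· ≤ B))) (d : α) :
    (s.sort (· ≤ ·)).getD k d ≤ B := by
  have hk : k < (s.sort (· ≤ ·)).length := by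
    rw [length_sort]; exact h.trans_le (card_le_card (filter_le _ s))
  rw [List.getD_eq_getElem _ d hk]
  by_contra! hB
  have := List.countP_le_le_of_lt_getElem (s.pairwise_sort _) hk hB
  rw [← countP_eq_card_filter, ← s.sort_eq (· ≤ ·), coe_countP] at h
  omega

section Simes

variable {m : ℕ} (p : Fin m → ℝ) {S : Finset (Fin m)} {k : ℕ} {B : ℝ}

theorem orderStat_le_of_le_card_filter (hk : 1 ≤ k) (h : k ≤ #{j ∈ S | p j ≤ B}) :
    orderStat p S k ≤ B := by
  refine Multiset.sort_getD_le_of_lt_card_filter ?_ 0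
  rw [Multiset.filter_map, Multiset.card_map]
  change k - 1 < #{j ∈ S | p j ≤ B}
  omega

theorem simes_le_of_le_card_filter (hk : 1 ≤ k) (h : k ≤ #{j ∈ S | p j ≤ B}) :
    simes p S ≤ #S * B / k := by
  have hkS : k ≤ #S := h.trans (card_filter_le _ _)
  rw [simes, dif_pos (card_pos.1 (hk.trans hkS))]
  refine (inf'_le _ (mem_Icc.2 ⟨hk, hkS⟩)).trans ?_
  gcongr
  exact orderStat_le_of_le_card_filter p hk h

theorem div_le_one_div_max_simes {α ℓ : ℝ} (hα : 0 < α) (hℓ : 0 < ℓ) {r : ℕ} (hkr : k ≤ r)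
    (h : k ≤ #{j ∈ S | p j ≤ α * r / (ℓ * m)}) :
    (k : ℝ) / (α * ((max r 1 : ℕ) : ℝ)) ≤ 1 / max (ℓ * simes p S) α := by
  obtain rfl | hk := k.eq_zero_or_pos
  · simp only [CharP.cast_eq_zero, zero_div]
    exact one_div_nonneg.2 (hα.le.trans (le_max_right _ _))
  have hr : max r 1 = r := max_eq_left (hk.trans_le hkr)
  have hr0 : (0 : ℝ) < r := by exact_mod_cast hk.trans_le hkr
  have hSm : #S ≤ m := (card_le_univ S).trans_eq (Fintype.card_fin m)
  have hm : (m : ℝ) ≠ 0 := by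
    have : 0 < m := hk.trans_le (h.trans ((card_filter_le _ _).trans hSm))
    positivity
  have hsimes := simes_le_of_le_card_filter p hk h
  rw [hr, div_le_div_iff₀ (by positivity) (hα.trans_le (le_max_right _ _)), one_mul,
    mul_max_of_nonneg _ _ (Nat.cast_nonneg k)]
  refine max_le ?_ (by rw [mul_comm]; gcongr)
  calc (k : ℝ) * (ℓ * simes p S) ≤ k * (ℓ * (#S * (α * r / (ℓ * m)) / k)) := by gcongr
    _ ≤ k * (ℓ * (m * (α * r / (ℓ * m)) / k)) := by gcongr
    _ = α * r := by field_simp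

end Simes

section StepUp

variable {m : ℕ} (σ : Equiv.Perm (Fin m)) {r : ℕ}

theorem card_image_filter_val_lt (hr : r ≤ m) : #(image σ {j : Fin m | (j : ℕ) < r}) = r := by
  rw [card_image_of_injective _ σ.injective, Fin.card_filter_val_lt, min_eq_right hr]

theorem le_of_mem_image_filter_val_lt {p : Fin m → ℝ} (hσ : Monotone (p ∘ σ)) {pord : ℕ → ℝ}
    (hpord : ∀ (r : ℕ) (hr : r < m), pord (r + 1) = p (σ ⟨r, hr⟩)) (hr : r ≤ m) {j : Fin m}
    (hj : j ∈ image σ {j : Fin m | (j : ℕ) < r}) : p j ≤ pord r := by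
  obtain ⟨i, hi, rfl⟩ := mem_image.1 hj
  have hi : (i : ℕ) < r := (mem_filter.1 hi).2
  have hr' : r - 1 < m := by omega
  calc p (σ i) ≤ p (σ ⟨r - 1, hr'⟩) := hσ (Fin.mk_le_mk.2 (by omega) : i ≤ ⟨r - 1, hr'⟩)
    _ = pord r := by rw [← hpord, Nat.sub_add_cancel (by omega)]

end StepUp

theorem statement_13_general (m : ℕ) (α : ℝ) (hα : α ∈ Set.Ioc (0 : ℝ) 1)
    (ℓ : ℝ) (hℓ : 0 < ℓ)
    (p : Fin m → ℝ)
    -- σ sorts the p-values in increasing order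
    (σ : Equiv.Perm (Fin m)) (hσ : ∀ i j : Fin m, i ≤ j → p (σ i) ≤ p (σ j))
    -- pord r = p_(r), the r-th smallest value, for 1 ≤ r ≤ m
    (pord : ℕ → ℝ) (hpord : ∀ (r : ℕ) (hr : r < m), pord (r + 1) = p (σ ⟨r, hr⟩))
    (rstar : ℕ)
    (hrstar : IsGreatest
      {r : ℕ | r = 0 ∨ (1 ≤ r ∧ r ≤ m ∧ pord r ≤ α * (r : ℝ) / (ℓ * (m : ℝ)))} rstar)
    -- R^Su: indices of the r* smallest p-values (BH at level α/ℓ)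
    (RSu : Finset (Fin m))
    (hRSu : RSu = Finset.image (fun j => σ j)
      (Finset.univ.filter fun j : Fin m => (j : ℕ) < rstar)) :
    ∀ S : Finset (Fin m), S.Nonempty →
      ((S ∩ RSu).card : ℝ) / (α * ((max RSu.card 1 : ℕ) : ℝ)) ≤
        1 / max (ℓ * simes p S) α := by
  intro S _
  have hrejected : rstar ≤ m ∧ ∀ j ∈ RSu, p j ≤ α * rstar / (ℓ * m) := by
    rcases hrstar.1 with rfl | ⟨-, hrm, hthreshold⟩
    · simp [hRSu]
    · exact ⟨hrm, fun j hj => (le_of_mem_image_filter_val_lt σ (fun i j => hσ i j) hpord hrm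
        (hRSu ▸ hj)).trans hthreshold⟩
  obtain ⟨hrm, hle⟩ := hrejected
  have hcard : #RSu = rstar := hRSu ▸ card_image_filter_val_lt σ hrm
  rw [← hcard] at hle
  refine div_le_one_div_max_simes p hα.1 hℓ (card_le_card inter_subset_right) ?_
  refine card_le_card fun j hj => mem_filter.2 ⟨(mem_inter.1 hj).1, ?_⟩
  exact hle j (mem_inter.1 hj).2

/-- Soundness of closed Su: with local e-values e_S = 1/max(ℓ·p_S, α) built
from Simes p-values, the BH rejection set at level α/ℓ satisfies
e_S ≥ |S ∩ R^Su|/(α·max(|R^Su|,1)) for every nonempty S. -/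
theorem statement_13 (m : ℕ) (hm : 1 ≤ m) (α : ℝ) (hα : α ∈ Set.Ioc (0 : ℝ) 1)
    (ℓ : ℝ) (hℓ : 0 < ℓ)
    (p : Fin m → ℝ) (hp : ∀ i, p i ∈ Set.Icc (0 : ℝ) 1)
    -- σ sorts the p-values in increasing order
    (σ : Equiv.Perm (Fin m)) (hσ : ∀ i j : Fin m, i ≤ j → p (σ i) ≤ p (σ j))
    -- pord r = p_(r), the r-th smallest value, for 1 ≤ r ≤ m
    (pord : ℕ → ℝ) (hpord : ∀ (r : ℕ) (hr : r < m), pord (r + 1) = p (σ ⟨r, hr⟩))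
    (rstar : ℕ)
    (hrstar : IsGreatest
      {r : ℕ | r = 0 ∨ (1 ≤ r ∧ r ≤ m ∧ pord r ≤ α * (r : ℝ) / (ℓ * (m : ℝ)))} rstar)
    -- R^Su: indices of the r* smallest p-values (BH at level α/ℓ)
    (RSu : Finset (Fin m))
    (hRSu : RSu = Finset.image (fun j => σ j)
      (Finset.univ.filter fun j : Fin m => (j : ℕ) < rstar)) :
    ∀ S : Finset (Fin m), S.Nonempty →
      ((S ∩ RSu).card : ℝ) / (α * ((max RSu.card 1 : ℕ) : ℝ)) ≤
        1 / max (ℓ * simes p S) α :=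
  statement_13_general m α hα ℓ hℓ p σ hσ pord hpord rstar hrstar RSu hRSu
end

section
/- (Closed knockoffs.) Let m ≥ 1, α ∈ (0,1], w_1,…,w_m ∈ ℝ, and c ∈ (0, ∞]. Define R^Kn = {i ∈ [m] : w_i ≥ c}, and assume that either R^Kn = ∅ or 1 + #{i ∈ [m] : w_i ≤ −c} ≤ α·|R^Kn|. For S ⊆ [m] define e_S = (∑_{i∈S} 1{w_i ≥ c}) / (1 + ∑_{i∈S} 1{w_i ≤ −c}). Then: (i) e_S ≥ FDP_S(R^Kn)/α for every S ⊆ [m]; and (ii) every R ⊆ [m] satisfying e_S ≥ FDP_S(R)/α for all S ⊆ [m] satisfies R ⊆ R^Kn — in particular no strict superset of R^Kn satisfies these inequalities. -/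
/-- Closed knockoffs: with knockoff local e-values
e_S = (∑_{i∈S} 1{w_i ≥ c})/(1 + ∑_{i∈S} 1{w_i ≤ −c}), (i) the knockoff rejection set
R^Kn = {i : w_i ≥ c} satisfies e_S ≥ FDP_S(R^Kn)/α for all S, and (ii) any R satisfying
e_S ≥ FDP_S(R)/α for all S is contained in R^Kn. -/
theorem statement_14 (m : ℕ) (hm : 1 ≤ m) (α : ℝ) (hα : α ∈ Set.Ioc (0 : ℝ) 1)
    (w : Fin m → ℝ) (c : EReal) (hc : 0 < c)
    (RKn : Finset (Fin m))
    (hRKn : RKn = Finset.univ.filter fun i : Fin m => c ≤ (w i : EReal))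
    (hthr : RKn = ∅ ∨
      1 + ((Finset.univ.filter fun i : Fin m => (w i : EReal) ≤ -c).card : ℝ)
        ≤ α * (RKn.card : ℝ)) :
    -- (i)
    ((∀ S : Finset (Fin m),
      ((RKn ∩ S).card : ℝ) / ((max RKn.card 1 : ℕ) : ℝ) / α ≤
        ((S.filter fun i => c ≤ (w i : EReal)).card : ℝ) /
          (1 + ((S.filter fun i => (w i : EReal) ≤ -c).card : ℝ))) ∧
    -- (ii)
     (∀ R : Finset (Fin m),
      (∀ S : Finset (Fin m),
        ((R ∩ S).card : ℝ) / ((max R.card 1 : ℕ) : ℝ) / α ≤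
          ((S.filter fun i => c ≤ (w i : EReal)).card : ℝ) /
            (1 + ((S.filter fun i => (w i : EReal) ≤ -c).card : ℝ))) →
      R ⊆ RKn)) := by
  obtain ⟨hα0, hα1⟩ := hα
  constructor
  · intro S
    have hinter : RKn ∩ S = S.filter fun i => c ≤ (w i : EReal) := by
      subst hRKn; ext i; simp [Finset.mem_filter, and_comm]
    have hbpos : (0:ℝ) < 1 + ((S.filter fun i => (w i : EReal) ≤ -c).card : ℝ) := by
      positivity
    rcases hthr with h0 | hle
    · rw [h0] at hinter ⊢
      simp only [Finset.empty_inter, Finset.card_empty, Nat.cast_zero, zero_div]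
      positivity
    · rw [hinter]
      have hRne : RKn ≠ ∅ := by
        intro h0; rw [h0] at hle; simp at hle
        have : (0:ℝ) < 1 + ((Finset.univ.filter fun i : Fin m => (w i : EReal) ≤ -c).card : ℝ) := by positivity
        linarith
      have hcard : 1 ≤ RKn.card := Finset.card_pos.mpr (Finset.nonempty_iff_ne_empty.mpr hRne)
      have hmax : max RKn.card 1 = RKn.card := max_eq_left hcard
      rw [hmax, div_div]
      have hsub : 1 + ((S.filter fun i => (w i : EReal) ≤ -c).card : ℝ)
          ≤ (RKn.card : ℝ) * α := by
        have : ((S.filter fun i => (w i : EReal) ≤ -c).card : ℝ)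
            ≤ ((Finset.univ.filter fun i : Fin m => (w i : EReal) ≤ -c).card : ℝ) := by
          exact_mod_cast Finset.card_le_card
            (Finset.filter_subset_filter _ (Finset.subset_univ S))
        linarith [hle, mul_comm α (RKn.card : ℝ) ▸ hle]
      exact div_le_div_of_nonneg_left (by positivity) hbpos hsub
  · intro R hR i hiR
    by_contra hnot
    have hi : ¬ c ≤ (w i : EReal) := by
      intro h; exact hnot (by rw [hRKn]; simp [Finset.mem_filter, h])
    have := hR {i}
    have hinter : R ∩ {i} = {i} := by
      ext j; simp only [Finset.mem_inter, Finset.mem_singleton]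
      constructor
      · exact And.right
      · rintro rfl; exact ⟨hiR, rfl⟩
    rw [hinter] at this
    have hnum : ({i} : Finset (Fin m)).filter (fun j => c ≤ (w j : EReal)) = ∅ := by
      ext j; simp only [Finset.mem_filter, Finset.mem_singleton, Finset.notMem_empty,
        iff_false, not_and]
      rintro rfl; exact hi
    rw [hnum] at this
    simp only [Finset.card_singleton, Nat.cast_one, Finset.card_empty, Nat.cast_zero,
      zero_div] at this
    have hM : (0:ℝ) < ((max R.card 1 : ℕ) : ℝ) := by
      have : 1 ≤ max R.card 1 := le_max_right _ _
      exact_mod_cast Nat.lt_of_lt_of_le Nat.zero_lt_one this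
    have hL : (0:ℝ) < 1 / ((max R.card 1 : ℕ) : ℝ) / α := by positivity
    linarith
end

section
/- (Post hoc switch from FDR to FWER.) Let α ∈ (0,1] and suppose the measurable random collection ℛ : Ω → (sets of subsets of [m]) controls FDR simultaneously at level α, i.e., ∫ max_{R ∈ ℛ(ω) ∪ {∅}} FDP_{N_P}(R) dP(ω) ≤ α for every P ∈ M. Define 𝐑(ω) = {i ∈ [m] : {i} ∈ ℛ(ω)}. Then 𝐑 controls FWER at level α: P({ω : 𝐑(ω) ∩ N_P ≠ ∅}) ≤ α for every P ∈ M. -/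
/-!
A singleton `{i}` with `i` a true null hypothesis has false discovery proportion `1`, so the
maximal FDP over `ℛ ω` is at least the indicator of the FWER event `𝐑(ω) ∩ N_P ≠ ∅`. Integrating
this pointwise bound against `P` turns FDR control at level `α` into FWER control at level `α`.
-/

open MeasureTheory

section FDP

variable {ι : Type*} [DecidableEq ι]

noncomputable def fdp (S R : Finset ι) : ℝ := ((R ∩ S).card : ℝ) / ((max R.card 1 : ℕ) : ℝ)

lemma fdp_singleton_of_mem {S : Finset ι} {i : ι} (hi : i ∈ S) : fdp S {i} = 1 := by
  simp [fdp, Finset.singleton_inter_of_mem hi]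

variable [Fintype ι]

def singletonsOf (𝓡 : Finset (Finset ι)) : Finset ι := Finset.univ.filter fun i => {i} ∈ 𝓡

lemma one_le_sup'_fdp {𝓡 : Finset (Finset ι)} {S : Finset ι}
    (h : (singletonsOf 𝓡 ∩ S).Nonempty) :
    1 ≤ (insert ∅ 𝓡).sup' (Finset.insert_nonempty _ _) (fdp S) := by
  obtain ⟨i, hi⟩ := h
  simp only [singletonsOf, Finset.mem_inter, Finset.mem_filter, Finset.mem_univ, true_and] at hi
  rw [← fdp_singleton_of_mem hi.2]
  exact Finset.le_sup' (fdp S) (Finset.mem_insert_of_mem hi.1)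

lemma setOf_singletonsOf_inter_nonempty {Ω : Type*} (ℛ : Ω → Finset (Finset ι)) (S : Finset ι) :
    {ω | (singletonsOf (ℛ ω) ∩ S).Nonempty} = ⋃ i ∈ S, {ω | {i} ∈ ℛ ω} := by
  ext ω
  simp [singletonsOf, Finset.Nonempty, and_comm]

lemma measurableSet_singletonsOf_inter_nonempty {Ω : Type*} [MeasurableSpace Ω]
    {ℛ : Ω → Finset (Finset ι)} (hmeas : ∀ R, MeasurableSet {ω | R ∈ ℛ ω}) (S : Finset ι) :
    MeasurableSet {ω | (singletonsOf (ℛ ω) ∩ S).Nonempty} := by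
  rw [setOf_singletonsOf_inter_nonempty]
  exact .biUnion S.countable_toSet fun i _ => hmeas {i}

end FDP

lemma measure_le_lintegral_of_one_le {α : Type*} [MeasurableSpace α] {μ : Measure α}
    {s : Set α} (hs : MeasurableSet s) {f : α → ENNReal} (hf : ∀ x ∈ s, 1 ≤ f x) :
    μ s ≤ ∫⁻ x, f x ∂μ :=
  calc μ s = ∫⁻ x, s.indicator 1 x ∂μ := (lintegral_indicator_one hs).symm
    _ ≤ ∫⁻ x, f x ∂μ := lintegral_mono fun x => by
      by_cases hx : x ∈ s
      · simpa [hx] using hf x hx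
      · simp [hx]

theorem statement_15_general (m : ℕ) {Ω : Type*} [MeasurableSpace Ω]
    (M : Set (Measure Ω))
    (N : Measure Ω → Finset (Fin m))
    (α : ℝ)
    (ℛ : Ω → Finset (Finset (Fin m)))
    (hmeas : ∀ R₀, MeasurableSet {ω | R₀ ∈ ℛ ω})
    (hctrl : ∀ P ∈ M,
      ∫⁻ ω, ENNReal.ofReal ((insert ∅ (ℛ ω)).sup' (Finset.insert_nonempty _ _)
        (fun R => ((R ∩ N P).card : ℝ) / ((max R.card 1 : ℕ) : ℝ))) ∂P
        ≤ ENNReal.ofReal α) :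
    ∀ P ∈ M,
      P {ω | ((Finset.univ.filter fun i : Fin m => ({i} : Finset (Fin m)) ∈ ℛ ω)
          ∩ N P).Nonempty} ≤ ENNReal.ofReal α := by
  intro P hP
  have hone : ∀ ω ∈ {ω | (singletonsOf (ℛ ω) ∩ N P).Nonempty},
      1 ≤ ENNReal.ofReal ((insert ∅ (ℛ ω)).sup' (Finset.insert_nonempty _ _) (fdp (N P))) :=
    fun ω hω => ENNReal.one_le_ofReal.mpr (one_le_sup'_fdp hω)
  exact (measure_le_lintegral_of_one_le
    (measurableSet_singletonsOf_inter_nonempty hmeas (N P)) hone).trans (hctrl P hP)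

/-- Post hoc switch from FDR to FWER: if ℛ controls FDR simultaneously at
level α, then the union of the singleton sets in ℛ, 𝐑(ω) = {i : {i} ∈ ℛ(ω)}, controls FWER
at level α. -/
theorem statement_15 (m : ℕ) (hm : 1 ≤ m) {Ω : Type*} [MeasurableSpace Ω]
    (M : Set (Measure Ω)) (hM : ∀ P ∈ M, IsProbabilityMeasure P)
    (H : Fin m → Set (Measure Ω))
    (N : Measure Ω → Finset (Fin m)) (hN : ∀ P i, i ∈ N P ↔ P ∈ H i)
    (α : ℝ) (hα : α ∈ Set.Ioc (0 : ℝ) 1)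
    (ℛ : Ω → Finset (Finset (Fin m)))
    (hmeas : ∀ R₀, MeasurableSet {ω | R₀ ∈ ℛ ω})
    (hctrl : ∀ P ∈ M,
      ∫⁻ ω, ENNReal.ofReal ((insert ∅ (ℛ ω)).sup' (Finset.insert_nonempty _ _)
        (fun R => ((R ∩ N P).card : ℝ) / ((max R.card 1 : ℕ) : ℝ))) ∂P
        ≤ ENNReal.ofReal α) :
    ∀ P ∈ M,
      P {ω | ((Finset.univ.filter fun i : Fin m => ({i} : Finset (Fin m)) ∈ ℛ ω)
          ∩ N P).Nonempty} ≤ ENNReal.ofReal α :=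
  statement_15_general m M N α ℛ hmeas hctrl
end

section
/- (e-Closure Principle for post hoc losses.) Let α ∈ (0,1], let F be a countable collection of loss functions, and let E = (e_S)_{S ⊆ [m]} be an e-collection. Then for every ω ∈ Ω, sup_{f ∈ F} max_{R ∈ ℛ_α^f(E)(ω)} f_{N_P}(R) ≤ α·e_{N_P}(ω), and consequently ∫ sup_{f ∈ F} max_{R ∈ ℛ_α^f(E)(ω)} f_{N_P}(R) dP(ω) ≤ α for every P ∈ M. Hence any family (ℛ^f)_{f ∈ F} of measurable random collections with ℛ^f(ω) ⊆ ℛ_α^f(E)(ω) for all f ∈ F and ω ∈ Ω satisfies ∫ sup_{f ∈ F} max_{R ∈ ℛ^f(ω) ∪ {∅}} f_{N_P}(R) dP(ω) ≤ α for every P ∈ M (post hoc error rate control over F at level α). -/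
open MeasureTheory

/-- e-Closure Principle for post hoc losses: for a countable family of losses
(F k) and an e-collection E, the supremum over losses of the maximal loss over the respective
e-Closure collections is pointwise at most α·e_{N_P}, its expectation is at most α, and hence
any family of random collections dominated by the e-Closure collections has post hoc error
rate control over the family at level α. -/
theorem statement_16 (m : ℕ) (hm : 1 ≤ m) {Ω : Type*} [MeasurableSpace Ω]
    (M : Set (Measure Ω)) (hM : ∀ P ∈ M, IsProbabilityMeasure P)
    (H : Fin m → Set (Measure Ω))
    (N : Measure Ω → Finset (Fin m)) (hN : ∀ P i, i ∈ N P ↔ P ∈ H i)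
    (α : ℝ) (hα : α ∈ Set.Ioc (0 : ℝ) 1)
    (F : ℕ → Finset (Fin m) → Finset (Fin m) → ℝ)
    (hF0 : ∀ (k : ℕ) (N' R : Finset (Fin m)), 0 ≤ F k N' R)
    (hFe : ∀ (k : ℕ) (N' : Finset (Fin m)), F k N' ∅ = 0)
    (E : Finset (Fin m) → Ω → ℝ)
    (hEmeas : ∀ S, Measurable (E S)) (hE0 : ∀ S ω, 0 ≤ E S ω)
    (hEint : ∀ P ∈ M, ∫⁻ ω, ENNReal.ofReal (E (N P) ω) ∂P ≤ 1) :
    -- pointwise bound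
    (∀ P ∈ M, ∀ ω : Ω,
      (⨆ k : ℕ, (insert ∅ (eClosure (F k) α E ω)).sup' (Finset.insert_nonempty _ _)
        (fun R => F k (N P) R)) ≤ α * E (N P) ω) ∧
    -- expected bound
    (∀ P ∈ M,
      ∫⁻ ω, ENNReal.ofReal (⨆ k : ℕ, (insert ∅ (eClosure (F k) α E ω)).sup'
        (Finset.insert_nonempty _ _) (fun R => F k (N P) R)) ∂P ≤ ENNReal.ofReal α) ∧
    -- post hoc error rate control for dominated families
    (∀ ℛ : ℕ → Ω → Finset (Finset (Fin m)),
      (∀ k R₀, MeasurableSet {ω | R₀ ∈ ℛ k ω}) →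
      (∀ k ω, ℛ k ω ⊆ eClosure (F k) α E ω) →
      ∀ P ∈ M,
        ∫⁻ ω, ENNReal.ofReal (⨆ k : ℕ, (insert ∅ (ℛ k ω)).sup'
          (Finset.insert_nonempty _ _) (fun R => F k (N P) R)) ∂P ≤ ENNReal.ofReal α) := by
  obtain ⟨hα0, hα1⟩ := hα
  -- element-wise bound
  have elem : ∀ (P : Measure Ω) (ω : Ω) (k : ℕ) (R : Finset (Fin m)),
      R ∈ insert ∅ (eClosure (F k) α E ω) → F k (N P) R ≤ α * E (N P) ω := by
    intro P ω k R hR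
    rcases Finset.mem_insert.mp hR with h | h
    · subst h
      rw [hFe]
      exact mul_nonneg hα0.le (hE0 _ _)
    · have := (Finset.mem_filter.mp h).2 (N P)
      rw [div_le_iff₀ hα0] at this
      linarith [this]
  have key : ∀ (P : Measure Ω) (ω : Ω) (k : ℕ),
      (insert ∅ (eClosure (F k) α E ω)).sup' (Finset.insert_nonempty _ _)
        (fun R => F k (N P) R) ≤ α * E (N P) ω := by
    intro P ω k
    exact Finset.sup'_le _ _ (fun R hR => elem P ω k R hR)
  have pt : ∀ (P : Measure Ω) (ω : Ω),
      (⨆ k : ℕ, (insert ∅ (eClosure (F k) α E ω)).sup' (Finset.insert_nonempty _ _)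
        (fun R => F k (N P) R)) ≤ α * E (N P) ω := by
    intro P ω
    exact Real.iSup_le (fun k => key P ω k) (mul_nonneg hα0.le (hE0 _ _))
  -- generic integral bound
  have expbd : ∀ (P : Measure Ω), P ∈ M → ∀ (g : Ω → ℝ),
      (∀ ω, g ω ≤ α * E (N P) ω) →
      ∫⁻ ω, ENNReal.ofReal (g ω) ∂P ≤ ENNReal.ofReal α := by
    intro P hP g hg
    calc ∫⁻ ω, ENNReal.ofReal (g ω) ∂P
        ≤ ∫⁻ ω, ENNReal.ofReal α * ENNReal.ofReal (E (N P) ω) ∂P := by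
          refine lintegral_mono fun ω => ?_
          rw [← ENNReal.ofReal_mul hα0.le]
          exact ENNReal.ofReal_le_ofReal (hg ω)
      _ = ENNReal.ofReal α * ∫⁻ ω, ENNReal.ofReal (E (N P) ω) ∂P :=
          lintegral_const_mul' _ _ ENNReal.ofReal_ne_top
      _ ≤ ENNReal.ofReal α * 1 := by
          exact mul_le_mul_right (hEint P hP) _
      _ = ENNReal.ofReal α := mul_one _
  refine ⟨fun P _ ω => pt P ω, fun P hP => expbd P hP _ (pt P), ?_⟩
  intro ℛ _ hsub P hP
  refine expbd P hP _ fun ω => ?_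
  refine Real.iSup_le (fun k => ?_) (mul_nonneg hα0.le (hE0 _ _))
  refine Finset.sup'_le _ _ fun R hR => ?_
  refine elem P ω k R ?_
  rcases Finset.mem_insert.mp hR with h | h
  · exact Finset.mem_insert.mpr (Or.inl h)
  · exact Finset.mem_insert.mpr (Or.inr (hsub k ω h))
end

section
/- (e-Closure Principle for post hoc nominal levels.) Let F be a countable collection of loss functions and let E = (e_S)_{S ⊆ [m]} be an e-collection not depending on α. Then for every ω ∈ Ω, sup_{α ∈ (0,1]} sup_{f ∈ F} max_{R ∈ ℛ_α^f(E)(ω)} f_{N_P}(R)/α ≤ e_{N_P}(ω), and consequently ∫ sup_{α ∈ (0,1]} sup_{f ∈ F} max_{R ∈ ℛ_α^f(E)(ω)} f_{N_P}(R)/α dP(ω) ≤ 1 for every P ∈ M. Conversely, suppose (ℛ_α^f)_{f ∈ F, α ∈ (0,1]} is a family of measurable random collections such that for every P ∈ M, ∫ sup_{α ∈ (0,1]} sup_{f ∈ F} max_{R ∈ ℛ_α^f(ω) ∪ {∅}} f_{N_P}(R)/α dP(ω) ≤ 1, and such that for each S ⊆ [m] the function e_S(ω) = sup_{α ∈ (0,1]}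 sup_{f ∈ F} max_{R ∈ ℛ_α^f(ω) ∪ {∅}} f_S(R)/α is measurable. Then E = (e_S) is an e-collection (not depending on α) and ℛ_α^f(ω) ⊆ ℛ_α^f(E)(ω) for every f ∈ F, α ∈ (0,1], and ω ∈ Ω. -/
open MeasureTheory
open scoped ENNReal

open Classical in
/-- The e-Closure collection `ℛ_α^f(E)(ω)` for an (extended-real-valued) e-collection,
with the conventions 0/0 = 0 and x/0 = ∞ of ℝ≥0∞. -/
noncomputable def eClosureE {m : ℕ} {Ω : Type*}
    (f : Finset (Fin m) → Finset (Fin m) → ℝ) (α : ℝ)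
    (E : Finset (Fin m) → Ω → ℝ≥0∞) (ω : Ω) : Finset (Finset (Fin m)) :=
  Finset.univ.filter
    (fun R => ∀ S : Finset (Fin m), ENNReal.ofReal (f S R) / ENNReal.ofReal α ≤ E S ω)

/-- e-Closure Principle for post hoc nominal levels: for an e-collection E not
depending on α, the supremum over α ∈ (0,1] and over losses f ∈ F of max_{R ∈ ℛ_α^f(E)} f(R)/α
is pointwise at most e_{N_P} and has expectation at most 1; conversely, a family (ℛ_α^f) with
post hoc control yields an e-collection e_S = sup_{α,f} max_{R ∈ ℛ_α^f ∪ {∅}} f_S(R)/α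
dominating it. -/
theorem statement_17 (m : ℕ) (hm : 1 ≤ m) {Ω : Type*} [MeasurableSpace Ω]
    (M : Set (Measure Ω)) (hM : ∀ P ∈ M, IsProbabilityMeasure P)
    (H : Fin m → Set (Measure Ω))
    (N : Measure Ω → Finset (Fin m)) (hN : ∀ P i, i ∈ N P ↔ P ∈ H i)
    (F : ℕ → Finset (Fin m) → Finset (Fin m) → ℝ)
    (hF0 : ∀ (k : ℕ) (N' R : Finset (Fin m)), 0 ≤ F k N' R)
    (hFe : ∀ (k : ℕ) (N' : Finset (Fin m)), F k N' ∅ = 0) :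
    -- direct part
    (∀ E : Finset (Fin m) → Ω → ℝ≥0∞, (∀ S, Measurable (E S)) →
      (∀ P ∈ M, ∫⁻ ω, E (N P) ω ∂P ≤ 1) →
      ∀ P ∈ M,
        (∀ ω : Ω,
          (⨆ α : Set.Ioc (0 : ℝ) 1, ⨆ k : ℕ, ⨆ R ∈ eClosureE (F k) (α : ℝ) E ω,
            ENNReal.ofReal (F k (N P) R) / ENNReal.ofReal (α : ℝ)) ≤ E (N P) ω) ∧
        ∫⁻ ω, (⨆ α : Set.Ioc (0 : ℝ) 1, ⨆ k : ℕ, ⨆ R ∈ eClosureE (F k) (α : ℝ) E ω,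
          ENNReal.ofReal (F k (N P) R) / ENNReal.ofReal (α : ℝ)) ∂P ≤ 1) ∧
    -- converse part
    (∀ ℛ : ℕ → ℝ → Ω → Finset (Finset (Fin m)),
      (∀ k α R₀, MeasurableSet {ω | R₀ ∈ ℛ k α ω}) →
      (∀ P ∈ M,
        ∫⁻ ω, (⨆ α : Set.Ioc (0 : ℝ) 1, ⨆ k : ℕ, ⨆ R ∈ insert ∅ (ℛ k (α : ℝ) ω),
          ENNReal.ofReal (F k (N P) R) / ENNReal.ofReal (α : ℝ)) ∂P ≤ 1) →
      (∀ S : Finset (Fin m), Measurable fun ω =>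
        (⨆ α : Set.Ioc (0 : ℝ) 1, ⨆ k : ℕ, ⨆ R ∈ insert ∅ (ℛ k (α : ℝ) ω),
          ENNReal.ofReal (F k S R) / ENNReal.ofReal (α : ℝ))) →
      -- the constructed family is an e-collection …
      (∀ P ∈ M,
        ∫⁻ ω, (⨆ α : Set.Ioc (0 : ℝ) 1, ⨆ k : ℕ, ⨆ R ∈ insert ∅ (ℛ k (α : ℝ) ω),
          ENNReal.ofReal (F k (N P) R) / ENNReal.ofReal (α : ℝ)) ∂P ≤ 1) ∧
      -- … and its e-Closure dominates the family ℛ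
      (∀ k : ℕ, ∀ α ∈ Set.Ioc (0 : ℝ) 1, ∀ ω : Ω,
        ℛ k α ω ⊆ eClosureE (F k) α
          (fun S ω' => ⨆ α' : Set.Ioc (0 : ℝ) 1, ⨆ k' : ℕ, ⨆ R ∈ insert ∅ (ℛ k' (α' : ℝ) ω'),
            ENNReal.ofReal (F k' S R) / ENNReal.ofReal (α' : ℝ)) ω)) := by
  constructor
  · intro E hEmeas hEint P hP
    have hpt : ∀ ω : Ω,
        (⨆ α : Set.Ioc (0 : ℝ) 1, ⨆ k : ℕ, ⨆ R ∈ eClosureE (F k) (α : ℝ) E ω,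
          ENNReal.ofReal (F k (N P) R) / ENNReal.ofReal (α : ℝ)) ≤ E (N P) ω := by
      intro ω
      refine iSup_le fun α => iSup_le fun k => iSup_le fun R => iSup_le fun hR => ?_
      have := (Finset.mem_filter.mp hR).2
      exact this (N P)
    refine ⟨hpt, ?_⟩
    calc ∫⁻ ω, (⨆ α : Set.Ioc (0 : ℝ) 1, ⨆ k : ℕ, ⨆ R ∈ eClosureE (F k) (α : ℝ) E ω,
            ENNReal.ofReal (F k (N P) R) / ENNReal.ofReal (α : ℝ)) ∂P
        ≤ ∫⁻ ω, E (N P) ω ∂P := lintegral_mono hpt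
      _ ≤ 1 := hEint P hP
  · intro ℛ hmeas hint hEmeas
    refine ⟨hint, ?_⟩
    intro k α hα ω R hR
    rw [eClosureE, Finset.mem_filter]
    refine ⟨Finset.mem_univ _, fun S => ?_⟩
    have h1 : ENNReal.ofReal (F k S R) / ENNReal.ofReal α
        ≤ ⨆ R' ∈ insert ∅ (ℛ k α ω), ENNReal.ofReal (F k S R') / ENNReal.ofReal α := by
      refine le_trans (le_of_eq rfl) ?_
      exact le_iSup₂ (f := fun R' (_ : R' ∈ insert ∅ (ℛ k α ω)) =>
        ENNReal.ofReal (F k S R') / ENNReal.ofReal α) R (Finset.mem_insert_of_mem hR)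
    refine h1.trans ?_
    have h2 := le_iSup (fun k' : ℕ => ⨆ R' ∈ insert ∅ (ℛ k' α ω),
        ENNReal.ofReal (F k' S R') / ENNReal.ofReal α) k
    refine h2.trans ?_
    exact le_iSup (fun α' : Set.Ioc (0 : ℝ) 1 => ⨆ k' : ℕ, ⨆ R' ∈ insert ∅ (ℛ k' (α' : ℝ) ω),
        ENNReal.ofReal (F k' S R') / ENNReal.ofReal (α' : ℝ)) ⟨α, hα⟩
end

section
/- (Simultaneous true discovery guarantee from e-Closure.) Let α ∈ (0,1] and let E = (e_S)_{S ⊆ [m]} be an e-collection. For R ⊆ [m] and ω ∈ Ω define d_E(R)(ω) = max{d ∈ {0,1,…,m} : e_S(ω) ≥ (1/α)·1{|R∖S| < d} for all S ⊆ [m]} (the defining set always contains d = 0). Then: (i) for every P ∈ M, P({ω : d_E(R)(ω) ≤ |R ∖ N_P| for all R ⊆ [m]}) ≥ 1 − α. (ii) If moreover e_S(ω) = φ_S(ω)/α for a family (φ_S)_{S ⊆ [m]} of {0,1}-valued measurable functions, then for every R ⊆ [m] and ω ∈ Ω, d_E(R)(ω) = min{|R∖S| : S ⊆ [m], φ_S(ω)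 = 0}, with the convention that the minimum over the empty set equals m. -/
open MeasureTheory

open Classical in
/-- The closed true-discovery bound
d_E(R)(ω) = max{d ∈ {0,…,m} : e_S(ω) ≥ (1/α)·1{|R∖S| < d} for all S}. -/
noncomputable def dE {m : ℕ} {Ω : Type*} (E : Finset (Fin m) → Ω → ℝ) (α : ℝ)
    (R : Finset (Fin m)) (ω : Ω) : ℕ :=
  ((Finset.range (m + 1)).filter
    (fun d => ∀ S : Finset (Fin m),
      (if (R \ S).card < d then 1 / α else 0) ≤ E S ω)).sup id

/-!
If `d_E(R)(ω) > |R ∖ S|`, the defining condition at `d = d_E(R)(ω)` forces `e_S(ω) ≥ 1/α`.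
With `S = N_P`, a failure of `d_E(R) ≤ |R ∖ N_P|` for any `R` thus lies in the event
`e_{N_P} ≥ 1/α`, which has `P`-probability at most `α` by Markov's inequality. When
`e_S = φ_S/α` with `φ_S ∈ {0,1}`, the condition `e_S ≥ 1/α` just says `φ_S = 1`.
-/

section ClosedBound

variable {m : ℕ} {Ω : Type*} {E : Finset (Fin m) → Ω → ℝ} {α : ℝ} {R S : Finset (Fin m)}
  {ω : Ω}

theorem dE_le : dE E α R ω ≤ m :=
  Finset.sup_le fun _ hd => Nat.lt_succ_iff.1 (Finset.mem_range.1 (Finset.mem_filter.1 hd).1)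

theorem one_div_le_of_card_sdiff_lt_dE (h : (R \ S).card < dE E α R ω) : 1 / α ≤ E S ω := by
  obtain ⟨d, hd, hlt⟩ := Finset.lt_sup_iff.1 h
  have hcond := (Finset.mem_filter.1 hd).2 S
  rwa [if_pos (show (R \ S).card < d from hlt)] at hcond

theorem le_dE {d : ℕ} (hd : d ≤ m) (hE0 : ∀ S, 0 ≤ E S ω)
    (h : ∀ S, (R \ S).card < d → 1 / α ≤ E S ω) : d ≤ dE E α R ω := by
  refine Finset.le_sup (f := id) (Finset.mem_filter.2 ⟨Finset.mem_range.2 (by omega), fun S => ?_⟩)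
  split_ifs with hS
  exacts [h S hS, hE0 S]

end ClosedBound

theorem measure_one_div_le_le_ofReal {Ω : Type*} [MeasurableSpace Ω] {P : Measure Ω}
    {f : Ω → ℝ} (hf : Measurable f) (hint : ∫⁻ ω, ENNReal.ofReal (f ω) ∂P ≤ 1)
    {α : ℝ} (hα : 0 < α) : P {ω | 1 / α ≤ f ω} ≤ ENNReal.ofReal α :=
  calc P {ω | 1 / α ≤ f ω}
      ≤ P {ω | ENNReal.ofReal (1 / α) ≤ ENNReal.ofReal (f ω)} :=
        measure_mono fun ω hω => ENNReal.ofReal_le_ofReal hω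
    _ ≤ (∫⁻ ω, ENNReal.ofReal (f ω) ∂P) / ENNReal.ofReal (1 / α) :=
        meas_ge_le_lintegral_div hf.ennreal_ofReal.aemeasurable
          (ENNReal.ofReal_pos.2 (by positivity)).ne' ENNReal.ofReal_ne_top
    _ ≤ 1 / ENNReal.ofReal (1 / α) := by gcongr
    _ = ENNReal.ofReal α := by
        rw [ENNReal.ofReal_div_of_pos hα, ENNReal.ofReal_one, one_div, one_div, inv_inv]

theorem ofReal_one_sub_le_measure_of_measure_compl_le {Ω : Type*} [MeasurableSpace Ω]
    {P : Measure Ω} [IsProbabilityMeasure P] {s : Set Ω} {α : ℝ} (hα : 0 ≤ α)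
    (h : P sᶜ ≤ ENNReal.ofReal α) : ENNReal.ofReal (1 - α) ≤ P s := by
  have hcover : 1 ≤ P s + ENNReal.ofReal α :=
    calc 1 = P (s ∪ sᶜ) := by rw [Set.union_compl_self, measure_univ]
      _ ≤ P s + P sᶜ := measure_union_le s sᶜ
      _ ≤ P s + ENNReal.ofReal α := by gcongr
  rw [ENNReal.ofReal_sub 1 hα, ENNReal.ofReal_one]
  exact tsub_le_iff_right.2 hcover

theorem ofReal_one_sub_le_measure_forall_dE_le {m : ℕ} {Ω : Type*} [MeasurableSpace Ω]
    {P : Measure Ω} [IsProbabilityMeasure P] {E : Finset (Fin m) → Ω → ℝ} {T : Finset (Fin m)}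
    (hE : Measurable (E T)) (hint : ∫⁻ ω, ENNReal.ofReal (E T ω) ∂P ≤ 1) {α : ℝ} (hα : 0 < α) :
    ENNReal.ofReal (1 - α) ≤ P {ω | ∀ R : Finset (Fin m), dE E α R ω ≤ (R \ T).card} := by
  refine ofReal_one_sub_le_measure_of_measure_compl_le hα.le
    ((measure_mono fun ω hω => ?_).trans (measure_one_div_le_le_ofReal hE hint hα))
  obtain ⟨R, hR⟩ : ∃ R : Finset (Fin m), (R \ T).card < dE E α R ω := by
    simpa using hω
  exact one_div_le_of_card_sdiff_lt_dE hR

theorem dE_eq_of_tests {m : ℕ} {Ω : Type*} {E φ : Finset (Fin m) → Ω → ℝ} {α : ℝ} (hα : 0 < α)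
    (R : Finset (Fin m)) (ω : Ω) (hφ : ∀ S, φ S ω = 0 ∨ φ S ω = 1)
    (hE : ∀ S, E S ω = φ S ω / α) :
    dE E α R ω =
      if h : (Finset.univ.filter fun S : Finset (Fin m) => φ S ω = 0).Nonempty then
        (Finset.univ.filter fun S : Finset (Fin m) => φ S ω = 0).inf' h (fun S => (R \ S).card)
      else m := by
  have hE0 : ∀ S, 0 ≤ E S ω := fun S => by
    rcases hφ S with h | h <;> rw [hE, h] <;> positivity
  have hpass : ∀ S, φ S ω ≠ 0 → 1 / α ≤ E S ω := fun S hS => by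
    rw [hE, (hφ S).resolve_left hS]
  have hfail : ∀ S, φ S ω = 0 → dE E α R ω ≤ (R \ S).card := fun S hS => by
    by_contra hlt
    have := one_div_le_of_card_sdiff_lt_dE (not_le.1 hlt)
    rw [hE, hS, zero_div] at this
    exact (one_div_pos.2 hα).not_ge this
  split_ifs with hZ
  · refine le_antisymm (Finset.le_inf' hZ _ fun S hS => hfail S (Finset.mem_filter.1 hS).2) ?_
    obtain ⟨S₀, hS₀⟩ := hZ
    have hle : (R \ S₀).card ≤ m := (R \ S₀).card_le_univ.trans_eq (Fintype.card_fin m)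
    refine le_dE ((Finset.inf'_le _ hS₀).trans hle) hE0 fun S hlt => ?_
    refine hpass S fun hS => hlt.not_ge (Finset.inf'_le _ ?_)
    exact Finset.mem_filter.2 ⟨Finset.mem_univ S, hS⟩
  · refine le_antisymm dE_le (le_dE le_rfl hE0 fun S _ => hpass S fun hS => hZ ?_)
    exact ⟨S, Finset.mem_filter.2 ⟨Finset.mem_univ S, hS⟩⟩

theorem statement_18_general (m : ℕ) {Ω : Type*} [MeasurableSpace Ω]
    (M : Set (Measure Ω)) (hM : ∀ P ∈ M, IsProbabilityMeasure P)
    (N : Measure Ω → Finset (Fin m))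
    (α : ℝ) (hα : α ∈ Set.Ioc (0 : ℝ) 1)
    (E : Finset (Fin m) → Ω → ℝ)
    (hEmeas : ∀ S, Measurable (E S))
    (hEint : ∀ P ∈ M, ∫⁻ ω, ENNReal.ofReal (E (N P) ω) ∂P ≤ 1) :
    -- (i)
    (∀ P ∈ M,
      ENNReal.ofReal (1 - α) ≤
        P {ω | ∀ R : Finset (Fin m), dE E α R ω ≤ (R \ N P).card}) ∧
    -- (ii)
    (∀ φ : Finset (Fin m) → Ω → ℝ,
      (∀ S, Measurable (φ S)) → (∀ S ω, φ S ω = 0 ∨ φ S ω = 1) →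
      (∀ S ω, E S ω = φ S ω / α) →
      ∀ (R : Finset (Fin m)) (ω : Ω),
        dE E α R ω =
          if h : (Finset.univ.filter fun S : Finset (Fin m) => φ S ω = 0).Nonempty then
            (Finset.univ.filter fun S : Finset (Fin m) => φ S ω = 0).inf' h
              (fun S => (R \ S).card)
          else m) := by
  refine ⟨fun P hP => ?_, fun φ _ hφ hE R ω => dE_eq_of_tests hα.1 R ω (hφ · ω) (hE · ω)⟩
  have := hM P hP
  exact ofReal_one_sub_le_measure_forall_dE_le (hEmeas (N P)) (hEint P hP) hα.1

/-- Simultaneous true discovery guarantee from e-Closure: (i) with probability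
at least 1 − α, d_E(R) ≤ |R ∖ N_P| simultaneously for all R; (ii) if e_S = φ_S/α for
{0,1}-valued local tests φ, then d_E(R) = min{|R∖S| : φ_S = 0} (= m when no φ_S vanishes). -/
theorem statement_18 (m : ℕ) (hm : 1 ≤ m) {Ω : Type*} [MeasurableSpace Ω]
    (M : Set (Measure Ω)) (hM : ∀ P ∈ M, IsProbabilityMeasure P)
    (H : Fin m → Set (Measure Ω))
    (N : Measure Ω → Finset (Fin m)) (hN : ∀ P i, i ∈ N P ↔ P ∈ H i)
    (α : ℝ) (hα : α ∈ Set.Ioc (0 : ℝ) 1)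
    (E : Finset (Fin m) → Ω → ℝ)
    (hEmeas : ∀ S, Measurable (E S)) (hE0 : ∀ S ω, 0 ≤ E S ω)
    (hEint : ∀ P ∈ M, ∫⁻ ω, ENNReal.ofReal (E (N P) ω) ∂P ≤ 1) :
    -- (i)
    (∀ P ∈ M,
      ENNReal.ofReal (1 - α) ≤
        P {ω | ∀ R : Finset (Fin m), dE E α R ω ≤ (R \ N P).card}) ∧
    -- (ii)
    (∀ φ : Finset (Fin m) → Ω → ℝ,
      (∀ S, Measurable (φ S)) → (∀ S ω, φ S ω = 0 ∨ φ S ω = 1) →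
      (∀ S ω, E S ω = φ S ω / α) →
      ∀ (R : Finset (Fin m)) (ω : Ω),
        dE E α R ω =
          if h : (Finset.univ.filter fun S : Finset (Fin m) => φ S ω = 0).Nonempty then
            (Finset.univ.filter fun S : Finset (Fin m) => φ S ω = 0).inf' h
              (fun S => (R \ S).card)
          else m) :=
  statement_18_general m M hM N α hα E hEmeas hEint
end

section
/- (Soundness of the minimally adaptive eBH under closure.) Let m ≥ 1, α ∈ (0,1], and let e_1,…,e_m be nonnegative reals with decreasing order statistics e_(1) ≥ … ≥ e_(m). Set r* = max({r ∈ [m] : r·e_(r) ≥ (m−1)/α} ∪ {0}) and let R be a set of indices of the r* largest values if (1/m) ∑_{i∈[m]} e_i > 1/α, and R = ∅ otherwise (the minimally adaptive eBH rejection set). Then R is mean-consistent at level α: for every nonempty S ⊆ [m], (1/|S|) ∑_{i∈S} e_i ≥ |R ∩ S| / (α · max(|R|, 1)). -/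
/-- Soundness of the minimally adaptive eBH under closure: the minimally
adaptive eBH rejection set (indices of the r* largest e-values where
r* = max({r ∈ [m] : r·e_(r) ≥ (m−1)/α} ∪ {0}) if the average e-value exceeds 1/α, and ∅
otherwise) is mean-consistent at level α. -/
theorem statement_19 (m : ℕ) (hm : 1 ≤ m) (α : ℝ) (hα : α ∈ Set.Ioc (0 : ℝ) 1)
    (e : Fin m → ℝ) (he : ∀ i, 0 ≤ e i)
    -- σ sorts the e-values in decreasing order
    (σ : Equiv.Perm (Fin m)) (hσ : ∀ i j : Fin m, i ≤ j → e (σ j) ≤ e (σ i))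
    -- eord r = e_(r), the r-th largest value, for 1 ≤ r ≤ m
    (eord : ℕ → ℝ) (heord : ∀ (r : ℕ) (hr : r < m), eord (r + 1) = e (σ ⟨r, hr⟩))
    (rstar : ℕ)
    (hrstar : IsGreatest
      {r : ℕ | r = 0 ∨ (1 ≤ r ∧ r ≤ m ∧ ((m : ℝ) - 1) / α ≤ (r : ℝ) * eord r)} rstar)
    -- the minimally adaptive eBH rejection set
    (Rma : Finset (Fin m))
    (hRma : Rma =
      if 1 / α < (1 / (m : ℝ)) * ∑ i : Fin m, e i then
        Finset.image (fun j => σ j) (Finset.univ.filter fun j : Fin m => (j : ℕ) < rstar)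
      else ∅) :
    ∀ S : Finset (Fin m), S.Nonempty →
      ((Rma ∩ S).card : ℝ) / (α * ((max Rma.card 1 : ℕ) : ℝ))
        ≤ (∑ i ∈ S, e i) / (S.card : ℝ) := by
  obtain ⟨hα0, hα1⟩ := hα
  intro S hS
  have hScard : (0 : ℝ) < (S.card : ℝ) := by
    exact_mod_cast Finset.card_pos.mpr hS
  have hsum : 0 ≤ ∑ i ∈ S, e i := Finset.sum_nonneg fun i _ => he i
  have hRHS0 : (0 : ℝ) ≤ (∑ i ∈ S, e i) / (S.card : ℝ) := div_nonneg hsum hScard.le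
  have hden : (0 : ℝ) < α * ((max Rma.card 1 : ℕ) : ℝ) := by
    apply mul_pos hα0
    have : 1 ≤ max Rma.card 1 := le_max_right _ _
    exact_mod_cast Nat.lt_of_lt_of_le Nat.zero_lt_one this
  -- trivial case helper
  have triv : Rma = ∅ →
      ((Rma ∩ S).card : ℝ) / (α * ((max Rma.card 1 : ℕ) : ℝ))
        ≤ (∑ i ∈ S, e i) / (S.card : ℝ) := by
    intro h
    rw [h]
    simpa using hRHS0
  by_cases hcond : 1 / α < (1 / (m : ℝ)) * ∑ i : Fin m, e i
  · rw [if_pos hcond] at hRma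
    rcases Nat.eq_zero_or_pos rstar with h0 | hpos
    · apply triv
      rw [hRma, h0]
      simp
    -- rstar ≥ 1 : get the key inequality
    rcases hrstar.1 with h0 | ⟨hr1, hrm, hkey⟩
    · omega
    have hm0 : (0 : ℝ) < (m : ℝ) := by exact_mod_cast Nat.lt_of_lt_of_le Nat.zero_lt_one hm
    -- card of Rma
    have hfilter : (Finset.univ.filter fun j : Fin m => (j : ℕ) < rstar)
        = (Finset.range rstar).attachFin
            (fun x hx => lt_of_lt_of_le (Finset.mem_range.mp hx) hrm) := by
      ext j; simp [Finset.mem_attachFin]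
    have hcard : Rma.card = rstar := by
      rw [hRma, Finset.card_image_of_injective _ σ.injective, hfilter,
        Finset.card_attachFin, Finset.card_range]
    have hmax : max Rma.card 1 = rstar := by omega
    have hrpos : (0 : ℝ) < (rstar : ℝ) := by exact_mod_cast hpos
    -- every element of Rma has e-value ≥ eord rstar
    have hrm' : rstar - 1 < m := by omega
    have heq : eord rstar = e (σ ⟨rstar - 1, hrm'⟩) := by
      have := heord (rstar - 1) hrm'
      rwa [Nat.sub_add_cancel hr1] at this
    have hbig : ∀ i ∈ Rma, eord rstar ≤ e i := by
      intro i hi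
      rw [hRma] at hi
      obtain ⟨j, hj, rfl⟩ := Finset.mem_image.mp hi
      have hjlt : (j : ℕ) < rstar := (Finset.mem_filter.mp hj).2
      rw [heq]
      exact hσ j ⟨rstar - 1, hrm'⟩ (by simp [Fin.le_def]; omega)
    have heord0 : 0 ≤ eord rstar := by rw [heq]; exact he _
    -- lower bound on the sum over S
    have hsumR : ((Rma ∩ S).card : ℝ) * eord rstar ≤ ∑ i ∈ S, e i := by
      calc ((Rma ∩ S).card : ℝ) * eord rstar = ∑ _i ∈ Rma ∩ S, eord rstar := by
            rw [Finset.sum_const, nsmul_eq_mul]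
        _ ≤ ∑ i ∈ Rma ∩ S, e i :=
            Finset.sum_le_sum fun i hi => hbig i (Finset.mem_inter.mp hi).1
        _ ≤ ∑ i ∈ S, e i :=
            Finset.sum_le_sum_of_subset_of_nonneg Finset.inter_subset_right
              (fun i _ _ => he i)
    have hk : ((Rma ∩ S).card : ℝ) ≤ (rstar : ℝ) := by
      have : (Rma ∩ S).card ≤ Rma.card := Finset.card_le_card Finset.inter_subset_left
      rw [hcard] at this
      exact_mod_cast this
    have hk0 : (0 : ℝ) ≤ ((Rma ∩ S).card : ℝ) := by positivity
    rw [hmax]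
    rw [div_le_div_iff₀ (by positivity) hScard]
    -- goal : ↑(Rma ∩ S).card * ↑S.card ≤ (∑ i ∈ S, e i) * (α * ↑rstar)
    rcases lt_or_ge S.card m with hsm | hsm
    · -- S.card ≤ m - 1
      have hsm1 : (S.card : ℝ) ≤ (m : ℝ) - 1 := by
        have : S.card + 1 ≤ m := hsm
        have : (S.card : ℝ) + 1 ≤ (m : ℝ) := by exact_mod_cast this
        linarith
      have hkey' : (m : ℝ) - 1 ≤ α * ((rstar : ℝ) * eord rstar) := by
        rw [div_le_iff₀ hα0] at hkey
        linarith [hkey]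
      calc ((Rma ∩ S).card : ℝ) * (S.card : ℝ)
          ≤ ((Rma ∩ S).card : ℝ) * ((m : ℝ) - 1) := by
            exact mul_le_mul_of_nonneg_left hsm1 hk0
        _ ≤ ((Rma ∩ S).card : ℝ) * (α * ((rstar : ℝ) * eord rstar)) :=
            mul_le_mul_of_nonneg_left hkey' hk0
        _ = (((Rma ∩ S).card : ℝ) * eord rstar) * (α * (rstar : ℝ)) := by ring
        _ ≤ (∑ i ∈ S, e i) * (α * (rstar : ℝ)) :=
            mul_le_mul_of_nonneg_right hsumR (by positivity)
    · -- S = univ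
      have hSuniv : S = Finset.univ := by
        apply Finset.eq_univ_of_card
        have : S.card ≤ m := by simpa using Finset.card_le_card (Finset.subset_univ S)
        simp; omega
      have hcards : (S.card : ℝ) = (m : ℝ) := by rw [hSuniv]; simp
      have htot : (m : ℝ) / α ≤ ∑ i ∈ S, e i := by
        rw [hSuniv]
        rw [div_le_iff₀ hα0]
        have := hcond
        rw [one_div_mul_eq_div] at this
        have := (div_lt_div_iff₀ hα0 hm0).mp this
        linarith
      calc ((Rma ∩ S).card : ℝ) * (S.card : ℝ)
          ≤ (rstar : ℝ) * (m : ℝ) := by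
            rw [hcards]; exact mul_le_mul_of_nonneg_right hk hm0.le
        _ = ((m : ℝ) / α) * (α * (rstar : ℝ)) := by field_simp
        _ ≤ (∑ i ∈ S, e i) * (α * (rstar : ℝ)) :=
            mul_le_mul_of_nonneg_right htot (by positivity)
  · apply triv
    rw [hRma, if_neg hcond]
end
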